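/- arXiv:1212.2609 — 4 statements merged into one kernel-verified Lean document; each statement's English description precedes it below -/
import Mathlib

section
/- Let n = 2(k+m)+5 and let f be the subregular linear functional on ut(n,ℝ) given by the matrix F described in the context. Then the coadjoint stabilizer 𝔤^f of f in ut(n,ℝ) equals the linear span of the following elements: the k matrix units at the antidiagonal positions of block (4,6); the m matrix units at the antidiagonal positions of block (1,9); the three matrix units occupying the 1×1 blocks (2,7), (2,8), (3,8); and the element γ₂·E_{(2,3)} + γ₁·E_{(7,8)}, where E_{(2,3)} and E_{(7,8)} are the matrix units occupying the 1×1 blocks (2,3) and (7,8). In particular dim 𝔤^f = k + m + 4. -/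
open Matrix

noncomputable section

/-- `x` is a strictly upper triangular matrix, i.e. an element of `ut(n,ℝ)`. -/
def IsStrictUpper {n : ℕ} (x : Matrix (Fin n) (Fin n) ℝ) : Prop :=
  ∀ i j : Fin n, j ≤ i → x i j = 0

/-- The coadjoint stabilizer in `ut(n,ℝ)` of the linear functional `x ↦ trace (F·x)`. -/
def coadjStab {n : ℕ} (F : Matrix (Fin n) (Fin n) ℝ) : Set (Matrix (Fin n) (Fin n) ℝ) :=
  {x | IsStrictUpper x ∧ ∀ y : Matrix (Fin n) (Fin n) ℝ, IsStrictUpper y →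
      Matrix.trace (F * (x * y - y * x)) = 0}

/-- The matrix `F` of the subregular functional for `n = 2(k+m)+5`, with blocks of sizes
`(m,1,1,k,1,k,1,1,m)`:  `λ`'s on the antidiagonal of block `(6,4)` (`λ₁` in the lower left
corner), `μ`'s on the antidiagonal of block `(9,1)`, `γ₁` in block `(7,2)`, `γ₂` in
block `(8,3)` and `γ₃` in block `(8,7)`. -/
def Fodd (k m : ℕ) (lam : Fin k → ℝ) (mu : Fin m → ℝ) (γ₁ γ₂ γ₃ : ℝ) :
    Matrix (Fin (2*(k+m)+5)) (Fin (2*(k+m)+5)) ℝ :=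
  (∑ i : Fin k, lam i • Matrix.single
      (⟨m+2*k+2-i.val, by have := i.isLt; omega⟩ : Fin (2*(k+m)+5))
      (⟨m+2+i.val, by have := i.isLt; omega⟩ : Fin (2*(k+m)+5)) (1:ℝ))
  + (∑ j : Fin m, mu j • Matrix.single
      (⟨2*m+2*k+4-j.val, by have := j.isLt; omega⟩ : Fin (2*(k+m)+5))
      (⟨j.val, by have := j.isLt; omega⟩ : Fin (2*(k+m)+5)) (1:ℝ))
  + γ₁ • Matrix.single (⟨m+2*k+3, by omega⟩ : Fin (2*(k+m)+5)) ⟨m, by omega⟩ (1:ℝ)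
  + γ₂ • Matrix.single (⟨m+2*k+4, by omega⟩ : Fin (2*(k+m)+5)) ⟨m+1, by omega⟩ (1:ℝ)
  + γ₃ • Matrix.single (⟨m+2*k+4, by omega⟩ : Fin (2*(k+m)+5)) ⟨m+2*k+3, by omega⟩ (1:ℝ)

/-- The generators of the stabilizer: the matrix units on the antidiagonals of blocks
`(4,6)` and `(1,9)`, the matrix units in the `1×1` blocks `(2,7)`, `(2,8)`, `(3,8)`,
and the element `γ₂·E₍₂,₃₎ + γ₁·E₍₇,₈₎`. -/
def genOdd (k m : ℕ) (γ₁ γ₂ : ℝ) : Set (Matrix (Fin (2*(k+m)+5)) (Fin (2*(k+m)+5)) ℝ) :=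
  (Set.range fun a : Fin k => Matrix.single
      (⟨m+2+a.val, by have := a.isLt; omega⟩ : Fin (2*(k+m)+5))
      (⟨m+2*k+2-a.val, by have := a.isLt; omega⟩ : Fin (2*(k+m)+5)) (1:ℝ)) ∪
  (Set.range fun a : Fin m => Matrix.single
      (⟨a.val, by have := a.isLt; omega⟩ : Fin (2*(k+m)+5))
      (⟨2*m+2*k+4-a.val, by have := a.isLt; omega⟩ : Fin (2*(k+m)+5)) (1:ℝ)) ∪
  {Matrix.single (⟨m, by omega⟩ : Fin (2*(k+m)+5)) ⟨m+2*k+3, by omega⟩ (1:ℝ),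
   Matrix.single (⟨m, by omega⟩ : Fin (2*(k+m)+5)) ⟨m+2*k+4, by omega⟩ (1:ℝ),
   Matrix.single (⟨m+1, by omega⟩ : Fin (2*(k+m)+5)) ⟨m+2*k+4, by omega⟩ (1:ℝ),
   γ₂ • Matrix.single (⟨m, by omega⟩ : Fin (2*(k+m)+5)) ⟨m+1, by omega⟩ (1:ℝ)
     + γ₁ • Matrix.single (⟨m+2*k+3, by omega⟩ : Fin (2*(k+m)+5)) ⟨m+2*k+4, by omega⟩ (1:ℝ)}


/-!
Pairing with `y` turns the stabilizer condition into: `x` is strictly upper triangular and the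
strictly lower part of `F x - x F` vanishes. Off its antidiagonal `P + T = 2(k+m)+4`, `F` has only
the three entries `γ₁, γ₂, γ₃`, so the `(P, Q)` entry of `F x - x F` involves at most seven entries
of `x`. For each position `(p, q)` off the pattern of the generators some `(P, Q)` below the
diagonal makes all of them but `x_{pq}` vanish by triangularity, leaving `c · x_{pq} = 0` with
`c` one of the nonzero `λ`, `μ`, `γ₁`, `γ₂`; at `(m+2k+3, m+1)` the equation is the relation
`γ₁ x_{m,m+1} = γ₂ x_{m+2k+3,m+2k+4}`. Conversely, for `x` supported on the pattern and satisfying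
this relation all these entries of `F x - x F` vanish. Each generator has a pivot entry at which
it is the only nonzero one, which gives linear independence.
-/

open Finset

theorem Fin.sum_ite_val_eq {M : Type*} [AddCommMonoid M] {k t : ℕ} (ht : t < k) (f : Fin k → M) :
    (∑ i : Fin k, if i.val = t then f i else 0) = f ⟨t, ht⟩ := by
  simp [← Fin.ext_iff (b := ⟨t, ht⟩)]

namespace Matrix

variable {R : Type*} {n : ℕ}

-- Entries at natural-number indices, `0` outside `Fin n`, so that index arithmetic is left
-- to `omega`.
def entryNat [Zero R] (x : Matrix (Fin n) (Fin n) R) (i j : ℕ) : R :=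
  if h : i < n ∧ j < n then x ⟨i, h.1⟩ ⟨j, h.2⟩ else 0

@[simp]
theorem entryNat_val [Zero R] (x : Matrix (Fin n) (Fin n) R) (i j : Fin n) :
    x.entryNat i j = x i j := by
  simp [entryNat]

theorem entryNat_of_not_lt [Zero R] (x : Matrix (Fin n) (Fin n) R) {i j : ℕ}
    (h : ¬(i < n ∧ j < n)) : x.entryNat i j = 0 :=
  dif_neg h

@[simp]
theorem entryNat_zero [Zero R] (i j : ℕ) : (0 : Matrix (Fin n) (Fin n) R).entryNat i j = 0 := by
  simp [entryNat]

@[simp]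
theorem entryNat_add [AddZeroClass R] (x y : Matrix (Fin n) (Fin n) R) (i j : ℕ) :
    (x + y).entryNat i j = x.entryNat i j + y.entryNat i j := by
  unfold entryNat; split_ifs <;> simp

@[simp]
theorem entryNat_sub [AddGroup R] (x y : Matrix (Fin n) (Fin n) R) (i j : ℕ) :
    (x - y).entryNat i j = x.entryNat i j - y.entryNat i j := by
  unfold entryNat; split_ifs <;> simp

@[simp]
theorem entryNat_smul [Zero R] {S : Type*} [SMulZeroClass S R] (c : S)
    (x : Matrix (Fin n) (Fin n) R) (i j : ℕ) :
    (c • x).entryNat i j = c • x.entryNat i j := by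
  unfold entryNat; split_ifs <;> simp

@[simp]
theorem entryNat_sum [AddCommMonoid R] {ι : Type*} (s : Finset ι)
    (x : ι → Matrix (Fin n) (Fin n) R) (i j : ℕ) :
    (∑ t ∈ s, x t).entryNat i j = ∑ t ∈ s, (x t).entryNat i j := by
  unfold entryNat; split_ifs <;> simp [sum_apply]

@[simp]
theorem entryNat_single [Zero R] (a b : Fin n) (c : R) (i j : ℕ) :
    (single a b c).entryNat i j = if a.val = i ∧ b.val = j then c else 0 := by
  unfold entryNat
  split_ifs with h h' h' <;> simp_all [single_apply, Fin.ext_iff]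
  omega

theorem entryNat_mul [NonUnitalNonAssocSemiring R] (x y : Matrix (Fin n) (Fin n) R) (i j : ℕ) :
    (x * y).entryNat i j = ∑ t ∈ Finset.range n, x.entryNat i t * y.entryNat t j := by
  by_cases h : i < n ∧ j < n
  · rw [← Fin.sum_univ_eq_sum_range (fun t => x.entryNat i t * y.entryNat t j)]
    simp [entryNat, h, mul_apply]
  · rw [entryNat_of_not_lt _ h]
    refine (Finset.sum_eq_zero fun t ht => ?_).symm
    rcases not_and_or.mp h with hi | hj
    · rw [entryNat_of_not_lt x (by omega), zero_mul]
    · rw [entryNat_of_not_lt y (by omega), mul_zero]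

theorem mem_span_of_single_mem {ι κ : Type*} [Fintype ι] [Fintype κ] [DecidableEq ι]
    [DecidableEq κ] [Semiring R] {s : Set (Matrix ι κ R)} {x : Matrix ι κ R}
    (h : ∀ i j, x i j ≠ 0 → single i j 1 ∈ s) : x ∈ Submodule.span R s := by
  rw [matrix_eq_sum_single x]
  refine Submodule.sum_mem _ fun i _ => Submodule.sum_mem _ fun j _ => ?_
  by_cases hx : x i j = 0
  · rw [hx, single_zero]
    exact Submodule.zero_mem _
  · rw [← mul_one (x i j), ← smul_eq_mul, ← smul_single]
    exact Submodule.smul_mem _ _ (Submodule.subset_span (h i j hx))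

theorem trace_mul_commutator {ι R : Type*} [Fintype ι] [CommRing R]
    (F x y : Matrix ι ι R) :
    trace (F * (x * y - y * x)) = trace ((F * x - x * F) * y) := by
  rw [mul_sub, sub_mul, trace_sub, trace_sub, Matrix.mul_assoc, ← Matrix.mul_assoc F y,
    trace_mul_comm (F * y), Matrix.mul_assoc]

end Matrix

theorem IsStrictUpper.entryNat_eq_zero {n : ℕ} {x : Matrix (Fin n) (Fin n) ℝ} (hx : IsStrictUpper x)
    {i j : ℕ} (hji : j ≤ i) : x.entryNat i j = 0 := by
  unfold entryNat
  split_ifs with h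
  · exact hx _ _ (Fin.le_def.mpr hji)
  · rfl

theorem mem_coadjStab_iff {n : ℕ} {F x : Matrix (Fin n) (Fin n) ℝ} :
    x ∈ coadjStab F ↔ IsStrictUpper x ∧ ∀ i j : Fin n, j < i → (F * x) i j = (x * F) i j := by
  refine and_congr_right fun _ => ⟨fun h i j hji => ?_, fun h y hy => ?_⟩
  · have hy : IsStrictUpper (single j i (1 : ℝ)) := fun a b hba =>
      single_apply_of_ne _ _ _ _ _ fun hab => absurd (hab.1 ▸ hab.2 ▸ hba) (not_le.mpr hji)
    have := h _ hy
    rwa [trace_mul_commutator, trace_mul_single, MulOpposite.op_one, one_smul, Matrix.sub_apply,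
      sub_eq_zero] at this
  · rw [trace_mul_commutator, trace]
    simp only [diag_apply, mul_apply]
    refine Finset.sum_eq_zero fun i _ => Finset.sum_eq_zero fun j _ => ?_
    rcases lt_or_ge j i with hji | hij
    · rw [Matrix.sub_apply, h i j hji, sub_self, zero_mul]
    · rw [hy j i hij, mul_zero]

theorem mem_coadjStab_iff_entryNat {n : ℕ} {F x : Matrix (Fin n) (Fin n) ℝ} :
    x ∈ coadjStab F ↔ IsStrictUpper x ∧
      ∀ P Q : ℕ, Q < P → P < n → (F * x).entryNat P Q = (x * F).entryNat P Q := by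
  rw [mem_coadjStab_iff]
  refine and_congr_right fun _ => ⟨fun h P Q hQP hP => ?_, fun h i j hji => ?_⟩
  · exact (entryNat_val _ ⟨P, hP⟩ ⟨Q, by omega⟩).trans
      ((h _ _ (Fin.mk_lt_mk.mpr hQP)).trans (entryNat_val _ _ _).symm)
  · simpa using h i j hji i.isLt

section Subregular

variable {k m : ℕ}

-- The entry of `Fodd` in column `t` on its antidiagonal `P + t = 2(k+m)+4`; it vanishes
-- outside the columns of blocks 1 and 4.
def antidiagCoeff (lam : Fin k → ℝ) (mu : Fin m → ℝ) (t : ℕ) : ℝ :=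
  (∑ i : Fin k, if m + 2 + i.val = t then lam i else 0) + ∑ j : Fin m, if j.val = t then mu j else 0

theorem antidiagCoeff_eq_zero (lam : Fin k → ℝ) (mu : Fin m → ℝ) {t : ℕ}
    (ht : ¬(t < m ∨ m + 2 ≤ t ∧ t < m + k + 2)) : antidiagCoeff lam mu t = 0 := by
  rw [antidiagCoeff, sum_eq_zero, sum_eq_zero, add_zero] <;>
    intro i _ <;> rw [if_neg (by omega)]

theorem antidiagCoeff_ne_zero {lam : Fin k → ℝ} {mu : Fin m → ℝ} (hlam : ∀ i, lam i ≠ 0)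
    (hmu : ∀ j, mu j ≠ 0) {t : ℕ} (ht : t < m ∨ m + 2 ≤ t ∧ t < m + k + 2) :
    antidiagCoeff lam mu t ≠ 0 := by
  rcases ht with ht | ht
  · rw [antidiagCoeff, sum_eq_zero fun i _ => if_neg (by omega), zero_add, Fin.sum_ite_val_eq ht]
    exact hmu _
  · have hsum : (∑ i : Fin k, if m + 2 + i.val = t then lam i else 0)
        = ∑ i : Fin k, if i.val = t - (m + 2) then lam i else 0 :=
      sum_congr rfl fun i _ => if_congr (by omega) rfl rfl
    rw [antidiagCoeff, hsum, Fin.sum_ite_val_eq (by omega),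
      sum_eq_zero fun j _ => if_neg (by have := j.isLt; omega), add_zero]
    exact hlam _

theorem entryNat_Fodd (lam : Fin k → ℝ) (mu : Fin m → ℝ) (γ₁ γ₂ γ₃ : ℝ) (P T : ℕ) :
    (Fodd k m lam mu γ₁ γ₂ γ₃).entryNat P T =
      (if P + T = 2 * (k + m) + 4 then antidiagCoeff lam mu T else 0)
      + (if P = m + 2 * k + 3 ∧ T = m then γ₁ else 0)
      + (if P = m + 2 * k + 4 ∧ T = m + 1 then γ₂ else 0)
      + (if P = m + 2 * k + 4 ∧ T = m + 2 * k + 3 then γ₃ else 0) := by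
  simp only [Fodd, entryNat_add, entryNat_sum, entryNat_smul, entryNat_single, smul_eq_mul,
    mul_ite, mul_one, mul_zero, antidiagCoeff]
  have hanti : ((∑ i : Fin k, if m + 2 * k + 2 - i.val = P ∧ m + 2 + i.val = T then lam i else 0)
      + ∑ j : Fin m, if 2 * m + 2 * k + 4 - j.val = P ∧ j.val = T then mu j else 0)
      = if P + T = 2 * (k + m) + 4 then (∑ i : Fin k, if m + 2 + i.val = T then lam i else 0)
          + ∑ j : Fin m, if j.val = T then mu j else 0 else 0 := by
    split_ifs with h
    · congr 1 <;> exact sum_congr rfl fun i _ => if_congr (by have := i.isLt; omega) rfl rfl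
    · rw [sum_eq_zero fun i _ => if_neg (by have := i.isLt; omega),
        sum_eq_zero fun j _ => if_neg (by have := j.isLt; omega), add_zero]
  rw [hanti]
  refine congrArg₂ _ (congrArg₂ _ (congrArg₂ _ rfl ?_) ?_) ?_ <;>
    exact if_congr (and_congr eq_comm eq_comm) rfl rfl

theorem entryNat_Fodd_mul (lam : Fin k → ℝ) (mu : Fin m → ℝ) (γ₁ γ₂ γ₃ : ℝ)
    (x : Matrix (Fin (2 * (k + m) + 5)) (Fin (2 * (k + m) + 5)) ℝ) {P : ℕ}
    (hP : P < 2 * (k + m) + 5) (Q : ℕ) :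
    (Fodd k m lam mu γ₁ γ₂ γ₃ * x).entryNat P Q =
      antidiagCoeff lam mu (2 * (k + m) + 4 - P) * x.entryNat (2 * (k + m) + 4 - P) Q
      + (if P = m + 2 * k + 3 then γ₁ * x.entryNat m Q else 0)
      + (if P = m + 2 * k + 4 then
          γ₂ * x.entryNat (m + 1) Q + γ₃ * x.entryNat (m + 2 * k + 3) Q else 0) := by
  have hanti : ∀ t, P + t = 2 * (k + m) + 4 ↔ t = 2 * (k + m) + 4 - P := by omega
  rw [entryNat_mul]
  simp only [entryNat_Fodd, add_mul, sum_add_distrib, ite_mul, zero_mul, ite_and, hanti,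
    sum_ite_eq', sum_ite_irrel, sum_const_zero, mem_range]
  split_ifs <;> first | omega | ring

theorem entryNat_mul_Fodd (lam : Fin k → ℝ) (mu : Fin m → ℝ) (γ₁ γ₂ γ₃ : ℝ)
    (x : Matrix (Fin (2 * (k + m) + 5)) (Fin (2 * (k + m) + 5)) ℝ) (P : ℕ) {Q : ℕ}
    (hQ : Q < 2 * (k + m) + 5) :
    (x * Fodd k m lam mu γ₁ γ₂ γ₃).entryNat P Q =
      antidiagCoeff lam mu Q * x.entryNat P (2 * (k + m) + 4 - Q)
      + (if Q = m then γ₁ * x.entryNat P (m + 2 * k + 3) else 0)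
      + (if Q = m + 1 then γ₂ * x.entryNat P (m + 2 * k + 4) else 0)
      + (if Q = m + 2 * k + 3 then γ₃ * x.entryNat P (m + 2 * k + 4) else 0) := by
  have hanti : ∀ t, t + Q = 2 * (k + m) + 4 ↔ t = 2 * (k + m) + 4 - Q := by omega
  rw [entryNat_mul]
  simp only [entryNat_Fodd, mul_comm (x.entryNat P _), add_mul, sum_add_distrib, ite_mul,
    zero_mul, ite_and, hanti, sum_ite_eq', mem_range]
  split_ifs <;> first | omega | ring

-- The (0-based) positions of the entries of the generators: the antidiagonals of blocks `(1,9)`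
-- and `(4,6)`, and the `1×1` blocks `(2,3)`, `(2,7)`, `(2,8)`, `(3,8)`, `(7,8)`.
def StabPattern (k m i j : ℕ) : Prop :=
  (i < m ∨ m + 2 ≤ i ∧ i < m + k + 2) ∧ i + j = 2 * (k + m) + 4 ∨
    i = m ∧ j = m + 1 ∨ i = m ∧ j = m + 2 * k + 3 ∨ i = m ∧ j = m + 2 * k + 4 ∨
    i = m + 1 ∧ j = m + 2 * k + 4 ∨ i = m + 2 * k + 3 ∧ j = m + 2 * k + 4

theorem stabPattern_lt {i j : ℕ} (h : StabPattern k m i j) : i < j := by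
  unfold StabPattern at h; omega

variable (k m γ₁ γ₂) in
def stabSubspace : Submodule ℝ (Matrix (Fin (2 * (k + m) + 5)) (Fin (2 * (k + m) + 5)) ℝ) where
  carrier := {x | (∀ i j, ¬StabPattern k m i j → x.entryNat i j = 0) ∧
    γ₁ * x.entryNat m (m + 1) = γ₂ * x.entryNat (m + 2 * k + 3) (m + 2 * k + 4)}
  add_mem' := by
    rintro x y ⟨hx, hx'⟩ ⟨hy, hy'⟩
    refine ⟨fun i j h => by simp [hx i j h, hy i j h], ?_⟩
    simp only [entryNat_add]
    linear_combination hx' + hy'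
  zero_mem' := ⟨fun i j _ => by simp [entryNat], by simp [entryNat]⟩
  smul_mem' := by
    rintro c x ⟨hx, hx'⟩
    refine ⟨fun i j h => by simp [hx i j h], ?_⟩
    simp only [entryNat_smul, smul_eq_mul]
    linear_combination c * hx'

variable {lam : Fin k → ℝ} {mu : Fin m → ℝ} {γ₁ γ₂ γ₃ : ℝ}
  {x : Matrix (Fin (2 * (k + m) + 5)) (Fin (2 * (k + m) + 5)) ℝ}

theorem coadjStab_Fodd_entry_eq (hx : x ∈ coadjStab (Fodd k m lam mu γ₁ γ₂ γ₃)) {P Q : ℕ}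
    (hQP : Q < P) (hP : P < 2 * (k + m) + 5) :
    antidiagCoeff lam mu (2 * (k + m) + 4 - P) * x.entryNat (2 * (k + m) + 4 - P) Q
      + (if P = m + 2 * k + 3 then γ₁ * x.entryNat m Q else 0)
      + (if P = m + 2 * k + 4 then
          γ₂ * x.entryNat (m + 1) Q + γ₃ * x.entryNat (m + 2 * k + 3) Q else 0)
    = antidiagCoeff lam mu Q * x.entryNat P (2 * (k + m) + 4 - Q)
      + (if Q = m then γ₁ * x.entryNat P (m + 2 * k + 3) else 0)
      + (if Q = m + 1 then γ₂ * x.entryNat P (m + 2 * k + 4) else 0)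
      + (if Q = m + 2 * k + 3 then γ₃ * x.entryNat P (m + 2 * k + 4) else 0) := by
  have h := (mem_coadjStab_iff_entryNat.mp hx).2 P Q hQP hP
  rwa [entryNat_Fodd_mul _ _ _ _ _ _ hP, entryNat_mul_Fodd _ _ _ _ _ _ _ (hQP.trans hP)] at h

theorem entryNat_eq_zero_of_add_lt (hlam : ∀ i, lam i ≠ 0) (hmu : ∀ j, mu j ≠ 0)
    (hx : x ∈ coadjStab (Fodd k m lam mu γ₁ γ₂ γ₃)) {p q : ℕ}
    (hp : p < m ∨ m + 2 ≤ p ∧ p < m + k + 2) (hpq : p < q) (hq : p + q < 2 * (k + m) + 4) :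
    x.entryNat p q = 0 := by
  have e := coadjStab_Fodd_entry_eq hx (P := 2 * (k + m) + 4 - p) (Q := q) (by omega) (by omega)
  simp (disch := omega) only [Nat.sub_sub_self, if_neg, hx.1.entryNat_eq_zero, mul_zero,
    add_zero, ite_self] at e
  exact (mul_eq_zero.mp e).resolve_left (antidiagCoeff_ne_zero hlam hmu hp)

theorem entryNat_eq_zero_of_lt_add (hlam : ∀ i, lam i ≠ 0) (hmu : ∀ j, mu j ≠ 0)
    (hx : x ∈ coadjStab (Fodd k m lam mu γ₁ γ₂ γ₃)) {p q t : ℕ}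
    (ht : t < m ∨ m + 2 ≤ t ∧ t < m + k + 2) (htq : t + q = 2 * (k + m) + 4)
    (htp : t < p) (hpq : p < q) : x.entryNat p q = 0 := by
  have e := coadjStab_Fodd_entry_eq hx (P := p) (Q := t) htp (by omega)
  simp +contextual (disch := omega) only [show 2 * (k + m) + 4 - t = q by omega,
    if_neg, hx.1.entryNat_eq_zero, mul_zero, add_zero, ite_self] at e
  exact (mul_eq_zero.mp e.symm).resolve_left (antidiagCoeff_ne_zero hlam hmu ht)

theorem entryNat_col_block7_eq_zero (hγ₁ : γ₁ ≠ 0) (hx : x ∈ coadjStab (Fodd k m lam mu γ₁ γ₂ γ₃))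
    {p : ℕ} (hmp : m < p) (hp : p < m + 2 * k + 3) : x.entryNat p (m + 2 * k + 3) = 0 := by
  have e := coadjStab_Fodd_entry_eq hx (P := p) (Q := m) hmp (by omega)
  simp (disch := omega) only [antidiagCoeff_eq_zero, if_neg, hx.1.entryNat_eq_zero,
    mul_zero, zero_mul, add_zero, zero_add] at e
  exact (mul_eq_zero.mp e.symm).resolve_left hγ₁

theorem entryNat_col_block8_eq_zero (hγ₂ : γ₂ ≠ 0) (hx : x ∈ coadjStab (Fodd k m lam mu γ₁ γ₂ γ₃))
    {p : ℕ} (hmp : m + 1 < p) (hp : p < m + 2 * k + 3) : x.entryNat p (m + 2 * k + 4) = 0 := by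
  have e := coadjStab_Fodd_entry_eq hx (P := p) (Q := m + 1) hmp (by omega)
  simp (disch := omega) only [antidiagCoeff_eq_zero, if_neg, hx.1.entryNat_eq_zero,
    mul_zero, zero_mul, add_zero, zero_add] at e
  exact (mul_eq_zero.mp e.symm).resolve_left hγ₂

theorem entryNat_row_block2_eq_zero (hγ₁ : γ₁ ≠ 0) (hx : x ∈ coadjStab (Fodd k m lam mu γ₁ γ₂ γ₃))
    {q : ℕ} (hq : m + 1 < q) (hq' : q < m + 2 * k + 3) : x.entryNat m q = 0 := by
  have e := coadjStab_Fodd_entry_eq hx (P := m + 2 * k + 3) (Q := q) hq' (by omega)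
  simp (disch := omega) only [antidiagCoeff_eq_zero, if_neg, hx.1.entryNat_eq_zero,
    mul_zero, zero_mul, add_zero, zero_add] at e
  exact (mul_eq_zero.mp e).resolve_left hγ₁

theorem entryNat_row_block3_eq_zero (hγ₂ : γ₂ ≠ 0) (hx : x ∈ coadjStab (Fodd k m lam mu γ₁ γ₂ γ₃))
    {q : ℕ} (hq : m + 1 < q) (hq' : q < m + 2 * k + 3) : x.entryNat (m + 1) q = 0 := by
  have e := coadjStab_Fodd_entry_eq hx (P := m + 2 * k + 4) (Q := q) (by omega) (by omega)
  simp (disch := omega) only [antidiagCoeff_eq_zero, if_neg, hx.1.entryNat_eq_zero,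
    mul_zero, zero_mul, add_zero, zero_add] at e
  exact (mul_eq_zero.mp e).resolve_left hγ₂

theorem coadjStab_Fodd_relation (hx : x ∈ coadjStab (Fodd k m lam mu γ₁ γ₂ γ₃)) :
    γ₁ * x.entryNat m (m + 1) = γ₂ * x.entryNat (m + 2 * k + 3) (m + 2 * k + 4) := by
  have e := coadjStab_Fodd_entry_eq hx (P := m + 2 * k + 3) (Q := m + 1) (by omega) (by omega)
  simpa (disch := omega) only [antidiagCoeff_eq_zero, if_neg, ite_true, hx.1.entryNat_eq_zero,
    mul_zero, zero_mul, add_zero, zero_add] using e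

theorem entryNat_eq_zero_of_not_stabPattern (hlam : ∀ i, lam i ≠ 0) (hmu : ∀ j, mu j ≠ 0)
    (hγ₁ : γ₁ ≠ 0) (hγ₂ : γ₂ ≠ 0) (hx : x ∈ coadjStab (Fodd k m lam mu γ₁ γ₂ γ₃)) {p q : ℕ}
    (h : ¬StabPattern k m p q) : x.entryNat p q = 0 := by
  unfold StabPattern at h
  rcases le_or_gt q p with hqp | hpq
  · exact hx.1.entryNat_eq_zero hqp
  by_cases hq : 2 * (k + m) + 4 < q
  · exact entryNat_of_not_lt _ (by omega)
  by_cases hq3 : q = m + 2 * k + 3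
  · subst hq3
    rcases lt_or_ge p m with hp | hp
    · exact entryNat_eq_zero_of_add_lt hlam hmu hx (Or.inl hp) hpq (by omega)
    · exact entryNat_col_block7_eq_zero hγ₁ hx (by omega) hpq
  by_cases hq4 : q = m + 2 * k + 4
  · subst hq4
    rcases lt_or_ge p m with hp | hp
    · exact entryNat_eq_zero_of_add_lt hlam hmu hx (Or.inl hp) hpq (by omega)
    · exact entryNat_col_block8_eq_zero hγ₂ hx (by omega) (by omega)
  by_cases hpm : p = m
  · rw [hpm]
    rcases lt_or_ge q (m + 2 * k + 3) with hq' | hq'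
    · exact entryNat_row_block2_eq_zero hγ₁ hx (by omega) hq'
    · exact entryNat_eq_zero_of_lt_add hlam hmu hx (t := 2 * (k + m) + 4 - q) (by omega)
        (by omega) (by omega) (by omega)
  by_cases hpm1 : p = m + 1
  · rw [hpm1]
    rcases lt_or_ge q (m + 2 * k + 3) with hq' | hq'
    · exact entryNat_row_block3_eq_zero hγ₂ hx (by omega) hq'
    · exact entryNat_eq_zero_of_lt_add hlam hmu hx (t := 2 * (k + m) + 4 - q) (by omega)
        (by omega) (by omega) (by omega)
  rcases lt_or_ge (p + q) (2 * (k + m) + 4) with hpq' | hpq'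
  · exact entryNat_eq_zero_of_add_lt hlam hmu hx (by omega) hpq hpq'
  · exact entryNat_eq_zero_of_lt_add hlam hmu hx (t := 2 * (k + m) + 4 - q) (by omega) (by omega)
      (by omega) hpq

theorem coadjStab_Fodd_subset (hlam : ∀ i, lam i ≠ 0) (hmu : ∀ j, mu j ≠ 0) (hγ₁ : γ₁ ≠ 0)
    (hγ₂ : γ₂ ≠ 0) : coadjStab (Fodd k m lam mu γ₁ γ₂ γ₃) ⊆ stabSubspace k m γ₁ γ₂ :=
  fun _ hx => ⟨fun _ _ h => entryNat_eq_zero_of_not_stabPattern hlam hmu hγ₁ hγ₂ hx h,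
    coadjStab_Fodd_relation hx⟩

theorem antidiagCoeff_mul_entryNat_eq_zero (hx : x ∈ stabSubspace k m γ₁ γ₂) {t i j : ℕ}
    (h : ¬((t < m ∨ m + 2 ≤ t ∧ t < m + k + 2) ∧ StabPattern k m i j)) :
    antidiagCoeff lam mu t * x.entryNat i j = 0 := by
  by_cases ht : t < m ∨ m + 2 ≤ t ∧ t < m + k + 2
  · rw [hx.1 i j fun hij => h ⟨ht, hij⟩, mul_zero]
  · rw [antidiagCoeff_eq_zero lam mu ht, zero_mul]

theorem stabSubspace_subset_coadjStab :
    (stabSubspace k m γ₁ γ₂ : Set _) ⊆ coadjStab (Fodd k m lam mu γ₁ γ₂ γ₃) := by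
  intro x hx
  refine mem_coadjStab_iff_entryNat.mpr ⟨fun i j hji => ?_, fun P Q hQP hP => ?_⟩
  · rw [← entryNat_val x i j]
    exact hx.1 _ _ fun h => (Fin.le_def.mp hji).not_gt (stabPattern_lt h)
  rw [entryNat_Fodd_mul _ _ _ _ _ _ hP, entryNat_mul_Fodd _ _ _ _ _ _ _ (hQP.trans hP)]
  by_cases hPQ : P = m + 2 * k + 3 ∧ Q = m + 1
  · obtain ⟨rfl, rfl⟩ := hPQ
    simp (disch := ((try unfold StabPattern); omega)) only [hx.1, if_neg, ite_true, mul_zero,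
      add_zero, zero_add]
    exact hx.2
  · simp +contextual (disch := ((try unfold StabPattern); omega)) only
      [antidiagCoeff_mul_entryNat_eq_zero hx, hx.1, mul_zero, add_zero, ite_self]

variable (k m γ₁ γ₂) in
def genOddFamily :
    Fin k ⊕ Fin m ⊕ Fin 4 → Matrix (Fin (2 * (k + m) + 5)) (Fin (2 * (k + m) + 5)) ℝ :=
  Sum.elim
    (fun a => single ⟨m + 2 + a.val, by omega⟩ ⟨m + 2 * k + 2 - a.val, by omega⟩ 1)
    (Sum.elim (fun a => single ⟨a.val, by omega⟩ ⟨2 * m + 2 * k + 4 - a.val, by omega⟩ 1)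
      ![single ⟨m, by omega⟩ ⟨m + 2 * k + 3, by omega⟩ 1,
        single ⟨m, by omega⟩ ⟨m + 2 * k + 4, by omega⟩ 1,
        single ⟨m + 1, by omega⟩ ⟨m + 2 * k + 4, by omega⟩ 1,
        γ₂ • single ⟨m, by omega⟩ ⟨m + 1, by omega⟩ 1
          + γ₁ • single ⟨m + 2 * k + 3, by omega⟩ ⟨m + 2 * k + 4, by omega⟩ 1])

theorem range_genOddFamily : Set.range (genOddFamily k m γ₁ γ₂) = genOdd k m γ₁ γ₂ := by
  simp only [genOddFamily, genOdd, Set.Sum.elim_range, range_cons, range_empty, Set.union_empty,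
    Set.insert_eq, Set.union_assoc]

variable (k m) in
def genOddPivot : Fin k ⊕ Fin m ⊕ Fin 4 → ℕ × ℕ :=
  Sum.elim (fun a => (m + 2 + a.val, m + 2 * k + 2 - a.val))
    (Sum.elim (fun a => (a.val, 2 * m + 2 * k + 4 - a.val))
      ![(m, m + 2 * k + 3), (m, m + 2 * k + 4), (m + 1, m + 2 * k + 4),
        (m + 2 * k + 3, m + 2 * k + 4)])

theorem entryNat_genOddFamily_pivot_of_ne {s t : Fin k ⊕ Fin m ⊕ Fin 4} (hst : s ≠ t) :
    (genOddFamily k m γ₁ γ₂ s).entryNat (genOddPivot k m t).1 (genOddPivot k m t).2 = 0 := by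
  rcases s with a | a | s <;> rcases t with b | b | t <;> try fin_cases s
  all_goals try fin_cases t
  all_goals simp [genOddFamily, genOddPivot, Fin.ext_iff] at hst ⊢
  all_goals first | omega | rw [if_neg (by omega), if_neg (by omega), add_zero]

theorem entryNat_genOddFamily_pivot_ne_zero (hγ₁ : γ₁ ≠ 0) (s : Fin k ⊕ Fin m ⊕ Fin 4) :
    (genOddFamily k m γ₁ γ₂ s).entryNat (genOddPivot k m s).1 (genOddPivot k m s).2 ≠ 0 := by
  rcases s with a | a | s
  · simp [genOddFamily, genOddPivot]
  · simp [genOddFamily, genOddPivot]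
  · fin_cases s <;> simp [genOddFamily, genOddPivot]
    rwa [if_neg (by omega), zero_add]

theorem linearIndependent_genOddFamily (hγ₁ : γ₁ ≠ 0) :
    LinearIndependent ℝ (genOddFamily k m γ₁ γ₂) := by
  rw [Fintype.linearIndependent_iff]
  intro g hg t
  have h := congrArg (entryNat · (genOddPivot k m t).1 (genOddPivot k m t).2) hg
  simp only [entryNat_sum, entryNat_smul, smul_eq_mul, entryNat_zero] at h
  rw [sum_eq_single t (fun s _ hst => by rw [entryNat_genOddFamily_pivot_of_ne hst, mul_zero])
    (by simp)] at h
  exact (mul_eq_zero.mp h).resolve_right (entryNat_genOddFamily_pivot_ne_zero hγ₁ t)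

theorem finrank_span_genOdd (hγ₁ : γ₁ ≠ 0) :
    Module.finrank ℝ (Submodule.span ℝ (genOdd k m γ₁ γ₂)) = k + m + 4 := by
  rw [← range_genOddFamily, finrank_span_eq_card (linearIndependent_genOddFamily hγ₁)]
  simp [add_assoc]

theorem single_mem_stabSubspace {a b : Fin (2 * (k + m) + 5)} (h : StabPattern k m a b)
    (h₁ : ¬(a.val = m ∧ b.val = m + 1)) (h₂ : ¬(a.val = m + 2 * k + 3 ∧ b.val = m + 2 * k + 4)) :
    single a b 1 ∈ stabSubspace k m γ₁ γ₂ := by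
  refine ⟨fun i j hij => ?_, ?_⟩
  · rw [entryNat_single, if_neg]
    rintro ⟨rfl, rfl⟩
    exact hij h
  · rw [entryNat_single, entryNat_single, if_neg h₁, if_neg h₂, mul_zero, mul_zero]

theorem genOddFamily_mem_stabSubspace (s : Fin k ⊕ Fin m ⊕ Fin 4) :
    genOddFamily k m γ₁ γ₂ s ∈ stabSubspace k m γ₁ γ₂ := by
  rcases s with a | a | s
  · exact single_mem_stabSubspace (by simp only [StabPattern]; omega) (by simp; omega)
      (by simp; omega)
  · exact single_mem_stabSubspace (by simp only [StabPattern]; omega) (by simp; omega)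
      (by simp; omega)
  fin_cases s
  · exact single_mem_stabSubspace (by simp [StabPattern]) (by simp; omega) (by simp)
  · exact single_mem_stabSubspace (by simp [StabPattern]) (by simp; omega) (by simp; omega)
  · exact single_mem_stabSubspace (by simp [StabPattern]) (by simp) (by simp; omega)
  · refine ⟨fun i j hij => ?_, ?_⟩
    · unfold StabPattern at hij
      simp only [genOddFamily, Sum.elim_inr]
      simp [if_neg (show ¬(m = i ∧ m + 1 = j) by omega),
        if_neg (show ¬(m + 2 * k + 3 = i ∧ m + 2 * k + 4 = j) by omega)]
    · simp [genOddFamily]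
      rw [if_neg (by omega), if_neg (by omega)]
      ring

theorem single_mem_genOdd {i j : Fin (2 * (k + m) + 5)} (h : StabPattern k m i j)
    (h₁ : ¬(i.val = m ∧ j.val = m + 1)) (h₂ : ¬(i.val = m + 2 * k + 3 ∧ j.val = m + 2 * k + 4)) :
    single i j 1 ∈ genOdd k m γ₁ γ₂ := by
  rw [← range_genOddFamily]
  unfold StabPattern at h
  rcases h with ⟨hi | hi, hij⟩ | h | h | h | h | h
  · exact ⟨Sum.inr (Sum.inl ⟨i, hi⟩), congr_arg₂ (single · · 1) rfl (Fin.ext (by simp; omega))⟩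
  · exact ⟨Sum.inl ⟨i - (m + 2), by omega⟩,
      congr_arg₂ (single · · 1) (Fin.ext (by simp; omega)) (Fin.ext (by simp; omega))⟩
  · exact absurd h h₁
  · exact ⟨Sum.inr (Sum.inr 0), congr_arg₂ (single · · 1) (Fin.ext h.1.symm) (Fin.ext h.2.symm)⟩
  · exact ⟨Sum.inr (Sum.inr 1), congr_arg₂ (single · · 1) (Fin.ext h.1.symm) (Fin.ext h.2.symm)⟩
  · exact ⟨Sum.inr (Sum.inr 2), congr_arg₂ (single · · 1) (Fin.ext h.1.symm) (Fin.ext h.2.symm)⟩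
  · exact absurd h h₂

theorem span_genOdd_le_stabSubspace :
    Submodule.span ℝ (genOdd k m γ₁ γ₂) ≤ stabSubspace k m γ₁ γ₂ := by
  rw [Submodule.span_le, ← range_genOddFamily]
  rintro _ ⟨s, rfl⟩
  exact genOddFamily_mem_stabSubspace s

theorem stabSubspace_le_span_genOdd (hγ₁ : γ₁ ≠ 0) :
    stabSubspace k m γ₁ γ₂ ≤ Submodule.span ℝ (genOdd k m γ₁ γ₂) := by
  intro x hx
  set g := genOddFamily k m γ₁ γ₂ (Sum.inr (Sum.inr 3))
  have hg : g ∈ genOdd k m γ₁ γ₂ := range_genOddFamily (γ₁ := γ₁) ▸ ⟨_, rfl⟩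
  -- Subtracting `c • g` clears the entry at `(m+2k+3, m+2k+4)` and, by the relation, the one at
  -- `(m, m+1)`; what is left is a combination of matrix units in `genOdd`.
  set c := γ₁⁻¹ * x.entryNat (m + 2 * k + 3) (m + 2 * k + 4) with hc
  have hx' : x - c • g ∈ Submodule.span ℝ (genOdd k m γ₁ γ₂) := by
    have hentry : ∀ i j : ℕ, (x - c • g).entryNat i j = x.entryNat i j
        - c * ((if m = i ∧ m + 1 = j then γ₂ else 0)
          + if m + 2 * k + 3 = i ∧ m + 2 * k + 4 = j then γ₁ else 0) := by
      intro i j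
      simp [g, genOddFamily, mul_add]
    refine mem_span_of_single_mem fun i j hij => ?_
    rw [← entryNat_val (x - c • g) i j, hentry] at hij
    refine single_mem_genOdd (by_contra fun h => hij ?_) (fun h => hij ?_) (fun h => hij ?_)
    · unfold StabPattern at h
      rw [hx.1 _ _ h, if_neg (by omega), if_neg (by omega)]
      ring
    · rw [h.1, h.2, if_pos ⟨rfl, rfl⟩, if_neg (by omega), hc]
      field_simp
      linear_combination hx.2
    · rw [h.1, h.2, if_neg (by omega), if_pos ⟨rfl, rfl⟩, hc]
      field_simp
      ring
  simpa using add_mem hx' (Submodule.smul_mem _ c (Submodule.subset_span hg))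

end Subregular

theorem coadjoint_stabilizer_subregular_odd_general (k m : ℕ)
    (lam : Fin k → ℝ) (hlam : ∀ i : Fin k, lam i ≠ 0)
    (mu : Fin m → ℝ) (hmu : ∀ j : Fin m, mu j ≠ 0)
    (γ₁ γ₂ γ₃ : ℝ) (hγ₁ : γ₁ ≠ 0) (hγ₂ : γ₂ ≠ 0) :
    coadjStab (Fodd k m lam mu γ₁ γ₂ γ₃)
        = ↑(Submodule.span ℝ (genOdd k m γ₁ γ₂)) ∧
    Module.finrank ℝ ↥(Submodule.span ℝ (genOdd k m γ₁ γ₂)) = k + m + 4 := by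
  have hspan : Submodule.span ℝ (genOdd k m γ₁ γ₂) = stabSubspace k m γ₁ γ₂ :=
    span_genOdd_le_stabSubspace.antisymm (stabSubspace_le_span_genOdd hγ₁)
  refine ⟨?_, finrank_span_genOdd hγ₁⟩
  rw [hspan]
  exact (coadjStab_Fodd_subset hlam hmu hγ₁ hγ₂).antisymm stabSubspace_subset_coadjStab

/-- Lemma 2 (odd case): the coadjoint stabilizer of the subregular functional `f` is the
linear span of the indicated matrix units, and its dimension is `k + m + 4`. -/
theorem coadjoint_stabilizer_subregular_odd (k m : ℕ) (hk : 1 ≤ k) (hm : 1 ≤ m)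
    (lam : Fin k → ℝ) (hlam : ∀ i : Fin k, lam i ≠ 0)
    (mu : Fin m → ℝ) (hmu : ∀ j : Fin m, mu j ≠ 0)
    (γ₁ γ₂ γ₃ : ℝ) (hγ₁ : γ₁ ≠ 0) (hγ₂ : γ₂ ≠ 0) :
    coadjStab (Fodd k m lam mu γ₁ γ₂ γ₃)
        = ↑(Submodule.span ℝ (genOdd k m γ₁ γ₂)) ∧
    Module.finrank ℝ ↥(Submodule.span ℝ (genOdd k m γ₁ γ₂)) = k + m + 4 :=
  coadjoint_stabilizer_subregular_odd_general k m lam hlam mu hmu γ₁ γ₂ γ₃ hγ₁ hγ₂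
end
end

section
/- Let n = 2(k+m+2), let f, F, S, d, G^f be as in the context. Then for every x ∈ UT(n,ℝ) and every h ∈ G^f such that d(x·h·x⁻¹) ≠ 0, every function in S vanishes at the point x·h·x⁻¹; in other words, Ad_G(G^f) ∩ {g : d(g) ≠ 0} is contained in the common zero set of S. -/
open Matrix

noncomputable section

/-- `g` is an upper unitriangular matrix, i.e. an element of `UT(n,ℝ)`. -/
def IsUnitriangular {n : ℕ} (g : Matrix (Fin n) (Fin n) ℝ) : Prop :=
  (∀ i j : Fin n, j < i → g i j = 0) ∧ ∀ i : Fin n, g i i = 1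

/-- The stabilizer in `UT(n,ℝ)` of the linear functional `x ↦ trace (F·x)`. -/
def grpStab {n : ℕ} (F : Matrix (Fin n) (Fin n) ℝ) : Set (Matrix (Fin n) (Fin n) ℝ) :=
  {g | IsUnitriangular g ∧ ∀ y : Matrix (Fin n) (Fin n) ℝ, IsStrictUpper y →
      Matrix.trace (F * (g * y * g⁻¹)) = Matrix.trace (F * y)}

/-- `n×n` real matrices for `n = 2(k+m+2)`. -/
abbrev MS (k m : ℕ) := Matrix (Fin (2*(k+m+2))) (Fin (2*(k+m+2))) ℝ

section Indices

variable (k m : ℕ)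

/-- Rows (and columns) of block `1` in the partition `(m,1,1,k,k,1,1,m)`. -/
def r1 (a : Fin m) : Fin (2*(k+m+2)) := ⟨a.val, by have := a.isLt; omega⟩
/-- The row/column of the `1×1` block `2`. -/
def i2 : Fin (2*(k+m+2)) := ⟨m, by omega⟩
/-- The row/column of the `1×1` block `3`. -/
def i3 : Fin (2*(k+m+2)) := ⟨m+1, by omega⟩
/-- Rows (and columns) of block `4`. -/
def r4 (a : Fin k) : Fin (2*(k+m+2)) := ⟨m+2+a.val, by have := a.isLt; omega⟩
/-- Rows (and columns) of block `5`. -/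
def c5 (a : Fin k) : Fin (2*(k+m+2)) := ⟨m+k+2+a.val, by have := a.isLt; omega⟩
/-- The row/column of the `1×1` block `6`. -/
def i6 : Fin (2*(k+m+2)) := ⟨m+2*k+2, by omega⟩
/-- The row/column of the `1×1` block `7`. -/
def i7 : Fin (2*(k+m+2)) := ⟨m+2*k+3, by omega⟩
/-- Rows (and columns) of block `8`. -/
def c8 (a : Fin m) : Fin (2*(k+m+2)) := ⟨m+2*k+4+a.val, by have := a.isLt; omega⟩

/-- The function `d(g) = C₂₃ · det C₄₅ · C₆₇`. -/
def dEven : MS k m → ℝ := fun g =>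
  g (i2 k m) (i3 k m) * (g.submatrix (r4 k m) (c5 k m)).det * g (i6 k m) (i7 k m)

/-- The matrix `F` of the subregular functional for `n = 2(k+m+2)`. -/
def Feven (lam : Fin k → ℝ) (mu : Fin m → ℝ) (γ₁ γ₂ γ₃ : ℝ) : MS k m :=
  (∑ i : Fin k, lam i • Matrix.single
      (⟨m+2*k+1-i.val, by have := i.isLt; omega⟩ : Fin (2*(k+m+2)))
      (⟨m+2+i.val, by have := i.isLt; omega⟩ : Fin (2*(k+m+2))) (1:ℝ))
  + (∑ j : Fin m, mu j • Matrix.single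
      (⟨2*m+2*k+3-j.val, by have := j.isLt; omega⟩ : Fin (2*(k+m+2)))
      (⟨j.val, by have := j.isLt; omega⟩ : Fin (2*(k+m+2))) (1:ℝ))
  + γ₁ • Matrix.single (i6 k m) (i2 k m) (1:ℝ)
  + γ₂ • Matrix.single (i7 k m) (i3 k m) (1:ℝ)
  + γ₃ • Matrix.single (i7 k m) (i6 k m) (1:ℝ)

/-- The set `S = S₀ ∪ S₁ ∪ S₂` of functions on the group, even case.
`S₀`: strictly-above-diagonal entries of the diagonal blocks `(1,1), (4,4), (5,5), (8,8)`;
`S₁`: the rational functions `c̃ = ±Δ(c)⁻¹·Δ̃(c)` for the entries `c` of the blocks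
`(1,2),(1,4),(1,6),(3,4),(3,6),(3,8),(5,6),(5,8),(7,8)`;
`S₂`: the entries of `C₂₃C₃₅ + C₂₄C₄₅` and `C₄₅C₅₇ + C₄₆C₆₇`, and `γ₁C₂₃ − γ₂C₆₇`. -/
def SEven (γ₁ γ₂ : ℝ) : Set (MS k m → ℝ) :=
  -- S₀ : blocks (1,1), (4,4), (5,5), (8,8)
  {φ | ∃ a b : Fin m, a < b ∧ φ = fun g => g (r1 k m a) (r1 k m b)} ∪
  {φ | ∃ a b : Fin k, a < b ∧ φ = fun g => g (r4 k m a) (r4 k m b)} ∪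
  {φ | ∃ a b : Fin k, a < b ∧ φ = fun g => g (c5 k m a) (c5 k m b)} ∪
  {φ | ∃ a b : Fin m, a < b ∧ φ = fun g => g (c8 k m a) (c8 k m b)} ∪
  -- S₁ : block (1,2), Φ(c) = ∅
  (Set.range fun a : Fin m => fun g : MS k m => g (r1 k m a) (i2 k m)) ∪
  -- S₁ : block (1,4), Φ(c) = {(2,3)}
  (Set.range fun p : Fin m × Fin k => fun g : MS k m =>
    -(g.submatrix ![r1 k m p.1, i2 k m] ![i3 k m, r4 k m p.2]).det / g (i2 k m) (i3 k m)) ∪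
  -- S₁ : block (1,6), Φ(c) = {(2,3),(4,5)}
  (Set.range fun a : Fin m => fun g : MS k m =>
    (-1)^(k+1) * (g.submatrix (Fin.cons (r1 k m a) (Fin.cons (i2 k m) (r4 k m)))
        (Fin.snoc (Fin.cons (i3 k m) (c5 k m)) (i6 k m))).det
      / (g.submatrix (Fin.cons (i2 k m) (r4 k m)) (Fin.cons (i3 k m) (c5 k m))).det) ∪
  -- S₁ : block (3,4), Φ(c) = ∅
  (Set.range fun b : Fin k => fun g : MS k m => g (i3 k m) (r4 k m b)) ∪
  -- S₁ : block (3,6), Φ(c) = {(4,5)}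
  {fun g : MS k m =>
    (-1)^k * (g.submatrix (Fin.cons (i3 k m) (r4 k m)) (Fin.snoc (c5 k m) (i6 k m))).det
      / (g.submatrix (r4 k m) (c5 k m)).det} ∪
  -- S₁ : block (3,8), Φ(c) = {(4,5),(6,7)}
  (Set.range fun b : Fin m => fun g : MS k m =>
    (-1)^(k+1) * (g.submatrix (Fin.cons (i3 k m) (Fin.snoc (r4 k m) (i6 k m)))
        (Fin.snoc (Fin.snoc (c5 k m) (i7 k m)) (c8 k m b))).det
      / (g.submatrix (Fin.snoc (r4 k m) (i6 k m)) (Fin.snoc (c5 k m) (i7 k m))).det) ∪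
  -- S₁ : block (5,6), Φ(c) = ∅
  (Set.range fun a : Fin k => fun g : MS k m => g (c5 k m a) (i6 k m)) ∪
  -- S₁ : block (5,8), Φ(c) = {(6,7)}
  (Set.range fun p : Fin k × Fin m => fun g : MS k m =>
    -(g.submatrix ![c5 k m p.1, i6 k m] ![i7 k m, c8 k m p.2]).det / g (i6 k m) (i7 k m)) ∪
  -- S₁ : block (7,8), Φ(c) = ∅
  (Set.range fun b : Fin m => fun g : MS k m => g (i7 k m) (c8 k m b)) ∪
  -- S₂ : entries of C₂₃C₃₅ + C₂₄C₄₅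
  (Set.range fun b : Fin k => fun g : MS k m =>
    g (i2 k m) (i3 k m) * g (i3 k m) (c5 k m b)
      + ∑ t : Fin k, g (i2 k m) (r4 k m t) * g (r4 k m t) (c5 k m b)) ∪
  -- S₂ : entries of C₄₅C₅₇ + C₄₆C₆₇
  (Set.range fun a : Fin k => fun g : MS k m =>
    (∑ t : Fin k, g (r4 k m a) (c5 k m t) * g (c5 k m t) (i7 k m))
      + g (r4 k m a) (i6 k m) * g (i6 k m) (i7 k m)) ∪
  -- S₂ : γ₁C₂₃ − γ₂C₆₇
  {fun g : MS k m => γ₁ * g (i2 k m) (i3 k m) - γ₂ * g (i6 k m) (i7 k m)}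

end Indices

/-!
Write `g = x h x⁻¹ = 1 + x (h - 1) x⁻¹`. The stabilizer condition says that `F h` and `h F` agree
strictly below the diagonal. Apart from row `7`, every row and column of `F` has at most one
nonzero entry, so a suitable entry of `F h = h F` has a multiple of the wanted entry of `h` on one
side and only entries of `h` below the diagonal on the other. This forces `h - 1` to be supported
on `(2,3), (2,6), (2,7), (3,7), (6,7)` and the antidiagonals of the blocks `(1,8)` and `(4,5)`, and
gives `γ₁ h₂₃ = γ₂ h₆₇`.

Since `x` and `x⁻¹` are upper triangular, `g_pq` (`p ≠ q`) only sees the positions `(a,b)` of that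
support with `p ≤ a` and `b ≤ q`. For the entries in `S` there are none, and `C₂₃ = h₂₃`,
`C₆₇ = h₆₇`. Each minor `Δ̃(c)` factors through fewer rows (or columns) of `h - 1` than its size,
so it is singular. The two block products in `S₂` reduce to off-diagonal entries of `x⁻¹ x = 1`.
-/

namespace Matrix

variable {ι κ l o R K : Type*}

theorem IsUpperTriangular.mul_apply_self [Fintype ι] [LinearOrder ι] [Semiring R]
    {A B : Matrix ι ι R} (hA : A.IsUpperTriangular) (hB : B.IsUpperTriangular) (i : ι) :
    (A * B) i i = A i i * B i i := by
  rw [mul_apply, Fintype.sum_eq_single i]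
  intro j hj
  rcases lt_or_gt_of_ne hj with hji | hij
  · rw [hA hji, zero_mul]
  · rw [hB hij, mul_zero]

theorem det_submatrix_mul_eq_zero [Field K] [Fintype κ] [DecidableEq κ] {d : ℕ}
    (A : Matrix l κ K) (B : Matrix κ o K) (r : Fin d → l) (c : Fin d → o) (T : Finset κ)
    (hT : T.card < d) (hAB : ∀ s ∉ T, (∀ i, A (r i) s = 0) ∨ ∀ j, B s (c j) = 0) :
    ((A * B).submatrix r c).det = 0 := by
  have hfac : (A * B).submatrix r c =
      A.submatrix r ((↑) : T → κ) * B.submatrix ((↑) : T → κ) c := by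
    ext i j
    simp only [submatrix_apply, mul_apply]
    rw [Finset.sum_coe_sort T fun s => A (r i) s * B s (c j)]
    refine (Finset.sum_subset (Finset.subset_univ T) fun s _ hs => ?_).symm
    rcases hAB s hs with h | h <;> simp [h]
  by_contra hdet
  have hrank := rank_of_isUnit _ ((isUnit_iff_isUnit_det _).2 (Ne.isUnit hdet))
  rw [Fintype.card_fin, hfac] at hrank
  have := (rank_mul_le_right (A.submatrix r ((↑) : T → κ)) _).trans
    (rank_le_card_height (B.submatrix ((↑) : T → κ) c))
  rw [Fintype.card_coe] at this
  omega

section Triangular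

variable [Fintype ι] [LinearOrder ι]

section Semiring

variable [Semiring R] {x y N : Matrix ι ι R} {p q : ι}

theorem mul_mul_apply_eq_sum [Fintype κ] (hx : x.IsUpperTriangular) (hy : y.IsUpperTriangular)
    (e f : κ → ι) (he : Function.Injective e)
    (hN : ∀ a b, p ≤ a → b ≤ q → N a b ≠ 0 → ∃ i, e i = a ∧ f i = b) :
    (x * N * y) p q = ∑ i, x p (e i) * N (e i) (f i) * y (f i) q := by
  classical
  set P := Finset.univ.image fun i => (e i, f i)
  have hout : ∀ ab ∉ P, x p ab.1 * N ab.1 ab.2 * y ab.2 q = 0 := by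
    rintro ⟨a, b⟩ hab
    rcases lt_or_ge a p with hap | hpa
    · simp [hx hap]
    rcases lt_or_ge q b with hqb | hbq
    · simp [hy hqb]
    by_cases hN0 : N a b = 0
    · simp [hN0]
    obtain ⟨i, rfl, rfl⟩ := hN a b hpa hbq hN0
    exact absurd (Finset.mem_image_of_mem _ (Finset.mem_univ i)) hab
  calc (x * N * y) p q = ∑ ab : ι × ι, x p ab.1 * N ab.1 ab.2 * y ab.2 q := by
        simp only [mul_apply, Finset.sum_mul, Fintype.sum_prod_type]
        exact Finset.sum_comm
    _ = ∑ ab ∈ P, x p ab.1 * N ab.1 ab.2 * y ab.2 q :=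
        (Finset.sum_subset (Finset.subset_univ P) fun ab _ hab => hout ab hab).symm
    _ = ∑ i, x p (e i) * N (e i) (f i) * y (f i) q :=
        Finset.sum_image fun i _ j _ hij => he (congrArg Prod.fst hij)

theorem mul_mul_apply_eq_single (hx : x.IsUpperTriangular) (hy : y.IsUpperTriangular)
    (a₀ b₀ : ι) (hN : ∀ a b, p ≤ a → b ≤ q → N a b ≠ 0 → a = a₀ ∧ b = b₀) :
    (x * N * y) p q = x p a₀ * N a₀ b₀ * y b₀ q := by
  simpa using mul_mul_apply_eq_sum hx hy (κ := Unit) (fun _ => a₀) (fun _ => b₀)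
    (fun _ _ _ => rfl) fun a b hpa hbq hN0 => by
      obtain ⟨rfl, rfl⟩ := hN a b hpa hbq hN0
      exact ⟨(), rfl, rfl⟩

theorem mul_mul_apply_eq_zero (hx : x.IsUpperTriangular) (hy : y.IsUpperTriangular)
    (hN : ∀ a b, p ≤ a → b ≤ q → N a b = 0) : (x * N * y) p q = 0 := by
  simpa using mul_mul_apply_eq_sum hx hy (κ := Empty) Empty.elim Empty.elim
    (fun a => a.elim) fun a b hpa hbq hN0 => absurd (hN a b hpa hbq) hN0

theorem mul_apply_eq_sum [Fintype κ] (hx : x.IsUpperTriangular) (hy : y.IsUpperTriangular)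
    (e : κ → ι) (he : Function.Injective e) (hcover : ∀ s, p ≤ s → s ≤ q → ∃ i, e i = s) :
    (x * y) p q = ∑ i, x p (e i) * y (e i) q := by
  simpa using mul_mul_apply_eq_sum hx hy (N := 1) e e he fun a b hpa hbq hab => by
    obtain rfl : a = b := by_contra fun h => hab (one_apply_ne h)
    obtain ⟨i, rfl⟩ := hcover a hpa hbq
    exact ⟨i, rfl, rfl⟩

end Semiring

variable [Field K] {x y N : Matrix ι ι K}

theorem det_submatrix_mul_mul_eq_zero_of_rows (hx : x.IsUpperTriangular)
    (hy : y.IsUpperTriangular) {d : ℕ} (r c : Fin d → ι) (T : Finset ι) (hT : T.card < d)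
    (hN : ∀ s ∉ T, (∀ i, s < r i) ∨ ∀ j b, N s b ≠ 0 → c j < b) :
    ((x * N * y).submatrix r c).det = 0 := by
  rw [Matrix.mul_assoc]
  refine det_submatrix_mul_eq_zero _ _ r c T hT fun s hs => (hN s hs).imp
    (fun h i => hx (h i)) fun h j => ?_
  rw [mul_apply]
  refine Finset.sum_eq_zero fun b _ => ?_
  by_cases hb : N s b = 0
  · rw [hb, zero_mul]
  · rw [hy (h j b hb), mul_zero]

theorem det_submatrix_mul_mul_eq_zero_of_cols (hx : x.IsUpperTriangular)
    (hy : y.IsUpperTriangular) {d : ℕ} (r c : Fin d → ι) (T : Finset ι) (hT : T.card < d)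
    (hN : ∀ s ∉ T, (∀ j, c j < s) ∨ ∀ i a, N a s ≠ 0 → a < r i) :
    ((x * N * y).submatrix r c).det = 0 := by
  refine det_submatrix_mul_eq_zero _ _ r c T hT fun s hs => (hN s hs).symm.imp
    (fun h i => ?_) fun h j => hy (h j)
  rw [mul_apply]
  refine Finset.sum_eq_zero fun a _ => ?_
  by_cases ha : N a s = 0
  · rw [ha, mul_zero]
  · rw [hx (h i a ha), zero_mul]

end Triangular

end Matrix

theorem Fin.card_filter_val_mem_le {n : ℕ} (T : Finset ℕ) :
    (Finset.univ.filter fun s : Fin n => s.val ∈ T).card ≤ T.card :=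
  Finset.card_le_card_of_injOn Fin.val (fun s hs => by simpa using hs) Fin.val_injective.injOn

namespace IsUnitriangular

variable {n : ℕ} {x : Matrix (Fin n) (Fin n) ℝ}

theorem isUpperTriangular (hx : IsUnitriangular x) : x.IsUpperTriangular :=
  fun i j hij => hx.1 i j hij

theorem det_eq_one (hx : IsUnitriangular x) : x.det = 1 := by
  simp [det_of_isUpperTriangular hx.isUpperTriangular, hx.2]

theorem mul_inv (hx : IsUnitriangular x) : x * x⁻¹ = 1 :=
  mul_nonsing_inv x (by simp [hx.det_eq_one])

theorem inv_mul (hx : IsUnitriangular x) : x⁻¹ * x = 1 :=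
  nonsing_inv_mul x (by simp [hx.det_eq_one])

theorem inv (hx : IsUnitriangular x) : IsUnitriangular x⁻¹ := by
  have := invertibleOfIsUnitDet x (by simp [hx.det_eq_one])
  have hinv : x⁻¹.IsUpperTriangular :=
    blockTriangular_inv_of_blockTriangular hx.isUpperTriangular
  refine ⟨fun i j hij => hinv hij, fun i => ?_⟩
  have hii := congrFun (congrFun hx.inv_mul i) i
  rwa [hinv.mul_apply_self hx.isUpperTriangular, hx.2, mul_one, one_apply_eq] at hii

theorem mul_mul_inv_eq_one_add (hx : IsUnitriangular x) (h : Matrix (Fin n) (Fin n) ℝ) :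
    x * h * x⁻¹ = 1 + x * (h - 1) * x⁻¹ := by
  rw [Matrix.mul_sub, Matrix.sub_mul, Matrix.mul_one, hx.mul_inv, add_sub_cancel]

theorem mul_mul_inv_apply_of_ne (hx : IsUnitriangular x) (h : Matrix (Fin n) (Fin n) ℝ)
    {p q : Fin n} (hpq : p ≠ q) : (x * h * x⁻¹) p q = (x * (h - 1) * x⁻¹) p q := by
  rw [hx.mul_mul_inv_eq_one_add, Matrix.add_apply, one_apply_ne hpq, zero_add]

theorem submatrix_mul_mul_inv_of_ne (hx : IsUnitriangular x) (h : Matrix (Fin n) (Fin n) ℝ)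
    {d : ℕ} (r c : Fin d → Fin n) (hrc : ∀ i j, r i ≠ c j) :
    (x * h * x⁻¹).submatrix r c = (x * (h - 1) * x⁻¹).submatrix r c := by
  ext i j
  exact hx.mul_mul_inv_apply_of_ne h (hrc i j)

end IsUnitriangular

section Stabilizer

variable {n : ℕ} {F h : Matrix (Fin n) (Fin n) ℝ}

theorem mul_apply_eq_of_mem_grpStab (hh : h ∈ grpStab F) {p q : Fin n} (hqp : q < p) :
    (F * h) p q = (h * F) p q := by
  obtain ⟨hu, htr⟩ := hh
  have hconj : ∀ a b : Fin n, b < a → (h⁻¹ * F * h) a b = F a b := by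
    intro a b hba
    have hE : IsStrictUpper (single b a (1 : ℝ)) := fun i j hji =>
      single_apply_of_ne _ _ _ _ _ fun ⟨hi, hj⟩ => (hi ▸ hj ▸ hji).not_gt hba
    have key := htr _ hE
    rw [show F * (h * single b a 1 * h⁻¹) = F * h * single b a 1 * h⁻¹ by
        simp only [Matrix.mul_assoc], trace_mul_comm, ← Matrix.mul_assoc,
      ← Matrix.mul_assoc] at key
    simpa [trace_mul_single] using key
  calc (F * h) p q = (h * (h⁻¹ * F * h)) p q := by
        rw [← Matrix.mul_assoc, ← Matrix.mul_assoc, hu.mul_inv, Matrix.one_mul]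
    _ = (h * F) p q := by
        rw [mul_apply, mul_apply]
        refine Finset.sum_congr rfl fun t _ => ?_
        rcases lt_or_ge t p with htp | hpt
        · rw [hu.1 p t htp, zero_mul, zero_mul]
        · rw [hconj t q (hqp.trans_le hpt)]

theorem apply_eq_zero_of_mem_grpStab_of_col (hh : h ∈ grpStab F) {t u q : Fin n} (hqt : q < t)
    (hFq : ∀ s, F s q ≠ 0 → s = u) (hFu : F u q ≠ 0) (hFt : ∀ s, F t s ≠ 0 → q < s) :
    h t u = 0 := by
  have e := mul_apply_eq_of_mem_grpStab hh hqt
  rw [mul_apply, Finset.sum_eq_zero, mul_apply, Fintype.sum_eq_single u] at e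
  · exact (mul_eq_zero.1 e.symm).resolve_right hFu
  · intro s hs
    rw [not_imp_comm.1 (hFq s) hs, mul_zero]
  · intro s _
    by_cases hs : F t s = 0
    · rw [hs, zero_mul]
    · rw [hh.1.1 s q (hFt s hs), mul_zero]

theorem apply_eq_zero_of_mem_grpStab_of_row (hh : h ∈ grpStab F) {t u p : Fin n} (hup : u < p)
    (hFp : ∀ s, s ≠ t → F p s ≠ 0 → u < s) (hFt : F p t ≠ 0) (hFu : ∀ s, F s u ≠ 0 → s < p) :
    h t u = 0 := by
  have e := mul_apply_eq_of_mem_grpStab hh hup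
  rw [mul_apply, Fintype.sum_eq_single t, mul_apply, Finset.sum_eq_zero] at e
  · exact (mul_eq_zero.1 e).resolve_left hFt
  · intro s _
    by_cases hs : F s u = 0
    · rw [hs, mul_zero]
    · rw [hh.1.1 p s (hFu s hs), zero_mul]
  · intro s hs
    by_cases hF : F p s = 0
    · rw [hF, zero_mul]
    · rw [hh.1.1 s u (hFp s hs hF), mul_zero]

end Stabilizer

section Feven

variable {k m : ℕ}

@[simp] theorem r1_val (a : Fin m) : (r1 k m a).val = a.val := rfl
@[simp] theorem i2_val : (i2 k m).val = m := rfl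
@[simp] theorem i3_val : (i3 k m).val = m + 1 := rfl
@[simp] theorem r4_val (a : Fin k) : (r4 k m a).val = m + 2 + a.val := rfl
@[simp] theorem c5_val (a : Fin k) : (c5 k m a).val = m + k + 2 + a.val := rfl
@[simp] theorem i6_val : (i6 k m).val = m + 2 * k + 2 := rfl
@[simp] theorem i7_val : (i7 k m).val = m + 2 * k + 3 := rfl
@[simp] theorem c8_val (a : Fin m) : (c8 k m a).val = m + 2 * k + 4 + a.val := rfl

theorem r4_injective : Function.Injective (r4 k m) :=
  fun a b hab => Fin.ext (by simpa using congrArg Fin.val hab)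

theorem c5_injective : Function.Injective (c5 k m) :=
  fun a b hab => Fin.ext (by simpa using congrArg Fin.val hab)

/-- Row and column numbers of the entries of `Feven`: the antidiagonal pairs `a + b = 2m+2k+3`
(i.e. `a = Fin.rev b`) with `b` in block `1` or `4`, and the positions `(6,2), (7,3), (7,6)` of the
block partition. -/
def FevenSupport (k m a b : ℕ) : Prop :=
  (a + b = 2*m+2*k+3 ∧ (b < m ∨ m+2 ≤ b ∧ b < m+k+2)) ∨
    (a = m+2*k+2 ∧ b = m) ∨ (a = m+2*k+3 ∧ (b = m+1 ∨ b = m+2*k+2))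

variable {lam : Fin k → ℝ} {mu : Fin m → ℝ} {γ₁ γ₂ γ₃ : ℝ}

theorem Feven_apply (a b : Fin (2*(k+m+2))) :
    Feven k m lam mu γ₁ γ₂ γ₃ a b =
      (∑ i : Fin k, if a.val = m+2*k+1-i.val ∧ b.val = m+2+i.val then lam i else 0) +
      (∑ j : Fin m, if a.val = 2*m+2*k+3-j.val ∧ b.val = j.val then mu j else 0) +
      (if a.val = m+2*k+2 ∧ b.val = m then γ₁ else 0) +
      (if a.val = m+2*k+3 ∧ b.val = m+1 then γ₂ else 0) +
      (if a.val = m+2*k+3 ∧ b.val = m+2*k+2 then γ₃ else 0) := by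
  simp [Feven, Matrix.sum_apply, Matrix.single_apply, Fin.ext_iff, eq_comm]

theorem fevenSupport_of_apply_ne_zero {a b : Fin (2*(k+m+2))}
    (h : Feven k m lam mu γ₁ γ₂ γ₃ a b ≠ 0) : FevenSupport k m a b := by
  by_contra hs
  unfold FevenSupport at hs
  apply h
  rw [Feven_apply, Finset.sum_eq_zero fun i _ => if_neg (by omega),
    Finset.sum_eq_zero fun j _ => if_neg (by omega), if_neg (by omega), if_neg (by omega),
    if_neg (by omega)]
  simp

theorem Feven_apply_eq_zero {a b : Fin (2*(k+m+2))} (hab : ¬FevenSupport k m a b) :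
    Feven k m lam mu γ₁ γ₂ γ₃ a b = 0 :=
  not_imp_comm.1 fevenSupport_of_apply_ne_zero hab

theorem Feven_apply_antidiag_block1 {a b : Fin (2*(k+m+2))} (hb : b.val < m)
    (hab : a.val + b.val = 2*m+2*k+3) : Feven k m lam mu γ₁ γ₂ γ₃ a b = mu ⟨b, hb⟩ := by
  rw [Feven_apply, Finset.sum_eq_zero fun i _ => if_neg (by omega),
    Fintype.sum_eq_single ⟨b, hb⟩
      fun j hj => if_neg (by rw [Fin.ne_iff_vne] at hj; simp at hj; omega),
    if_pos (by simp; omega), if_neg (by omega), if_neg (by omega), if_neg (by omega)]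
  simp

theorem Feven_apply_antidiag_block4 {a b : Fin (2*(k+m+2))} (hb : m + 2 ≤ b.val)
    (hb' : b.val < m+k+2) (hab : a.val + b.val = 2*m+2*k+3) :
    Feven k m lam mu γ₁ γ₂ γ₃ a b = lam ⟨b - (m+2), by omega⟩ := by
  rw [Feven_apply, Fintype.sum_eq_single ⟨b - (m+2), by omega⟩
      fun i hi => if_neg (by rw [Fin.ne_iff_vne] at hi; simp at hi; omega),
    Finset.sum_eq_zero fun j _ => if_neg (by omega), if_pos (by simp; omega), if_neg (by omega),
    if_neg (by omega), if_neg (by omega)]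
  simp

theorem Feven_apply_row6_col2 {a b : Fin (2*(k+m+2))} (ha : a.val = m+2*k+2) (hb : b.val = m) :
    Feven k m lam mu γ₁ γ₂ γ₃ a b = γ₁ := by
  rw [Feven_apply, Finset.sum_eq_zero fun i _ => if_neg (by omega),
    Finset.sum_eq_zero fun j _ => if_neg (by omega), if_pos ⟨ha, hb⟩, if_neg (by omega),
    if_neg (by omega)]
  simp

theorem Feven_apply_row7_col3 {a b : Fin (2*(k+m+2))} (ha : a.val = m+2*k+3)
    (hb : b.val = m+1) : Feven k m lam mu γ₁ γ₂ γ₃ a b = γ₂ := by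
  rw [Feven_apply, Finset.sum_eq_zero fun i _ => if_neg (by omega),
    Finset.sum_eq_zero fun j _ => if_neg (by omega), if_neg (by omega), if_pos ⟨ha, hb⟩,
    if_neg (by omega)]
  simp

theorem Feven_apply_row7_col6 {a b : Fin (2*(k+m+2))} (ha : a.val = m+2*k+3)
    (hb : b.val = m+2*k+2) : Feven k m lam mu γ₁ γ₂ γ₃ a b = γ₃ := by
  rw [Feven_apply, Finset.sum_eq_zero fun i _ => if_neg (by omega),
    Finset.sum_eq_zero fun j _ => if_neg (by omega), if_neg (by omega), if_neg (by omega),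
    if_pos ⟨ha, hb⟩]
  simp

theorem Feven_apply_ne_zero (hlam : ∀ i : Fin k, i.val + 1 < k → lam i ≠ 0)
    (hmu : ∀ j, mu j ≠ 0) (hγ₁ : γ₁ ≠ 0) (hγ₂ : γ₂ ≠ 0) {a b : Fin (2*(k+m+2))}
    (hab : FevenSupport k m a b) (hb : b.val ≠ m+k+1) (hb' : b.val ≠ m+2*k+2) :
    Feven k m lam mu γ₁ γ₂ γ₃ a b ≠ 0 := by
  rcases hab with ⟨hab, hbm | hb4⟩ | ⟨ha, hbm⟩ | ⟨ha, hbm | hbm⟩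
  · exact Feven_apply_antidiag_block1 hbm hab ▸ hmu _
  · exact Feven_apply_antidiag_block4 hb4.1 hb4.2 hab ▸ hlam _ (by simp; omega)
  · exact Feven_apply_row6_col2 ha hbm ▸ hγ₁
  · exact Feven_apply_row7_col3 ha hbm ▸ hγ₂
  · exact absurd hbm hb'

end Feven

section StabilizerShape

variable {k m : ℕ} {lam : Fin k → ℝ} {mu : Fin m → ℝ} {γ₁ γ₂ γ₃ : ℝ} {h : MS k m}

/-- The positions above the diagonal at which an element of the stabilizer of `Feven` can differ
from the identity: `(2,3), (2,6), (2,7), (3,7), (6,7)` and the antidiagonals of the blocks `(1,8)`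
and `(4,5)`. -/
def StabSupport (k m a b : ℕ) : Prop :=
  (a = m ∧ (b = m+1 ∨ b = m+2*k+2 ∨ b = m+2*k+3)) ∨ ((a = m+1 ∨ a = m+2*k+2) ∧ b = m+2*k+3) ∨
    ((a < m ∨ m+2 ≤ a ∧ a < m+k+2) ∧ a + b = 2*m+2*k+3)

def IsStabShaped (k m : ℕ) (h : MS k m) : Prop :=
  ∀ a b : Fin (2*(k+m+2)), (h - 1) a b ≠ 0 → StabSupport k m a b

theorem Feven_stab_apply_eq_zero_of_col (hh : h ∈ grpStab (Feven k m lam mu γ₁ γ₂ γ₃))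
    (hlam : ∀ i : Fin k, i.val + 1 < k → lam i ≠ 0) (hmu : ∀ j, mu j ≠ 0) (hγ₁ : γ₁ ≠ 0)
    (hγ₂ : γ₂ ≠ 0) {t u : Fin (2*(k+m+2))} (q : ℕ) (hqt : q < t.val) (huq : FevenSupport k m u q)
    (hq : q ≠ m+k+1) (hq' : q ≠ m+2*k+2) (hFt : ∀ s, FevenSupport k m t s → q < s) :
    h t u = 0 :=
  apply_eq_zero_of_mem_grpStab_of_col (q := ⟨q, by omega⟩) hh hqt
    (fun s hs => Fin.ext <| by
      have : FevenSupport k m s q := fevenSupport_of_apply_ne_zero hs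
      unfold FevenSupport at this huq
      omega)
    (Feven_apply_ne_zero hlam hmu hγ₁ hγ₂ huq hq hq')
    fun s hs => hFt s (fevenSupport_of_apply_ne_zero hs)

theorem Feven_stab_apply_eq_zero_of_row (hh : h ∈ grpStab (Feven k m lam mu γ₁ γ₂ γ₃))
    (hlam : ∀ i : Fin k, i.val + 1 < k → lam i ≠ 0) (hmu : ∀ j, mu j ≠ 0) (hγ₁ : γ₁ ≠ 0)
    (hγ₂ : γ₂ ≠ 0) {t u : Fin (2*(k+m+2))} (p : ℕ) (hp : p < 2*(k+m+2)) (hup : u.val < p)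
    (hpt : FevenSupport k m p t) (ht : t.val ≠ m+k+1) (ht' : t.val ≠ m+2*k+2)
    (hFp : ∀ s, s ≠ t.val → FevenSupport k m p s → u.val < s)
    (hFu : ∀ s, FevenSupport k m s u → s < p) :
    h t u = 0 :=
  apply_eq_zero_of_mem_grpStab_of_row (p := ⟨p, hp⟩) hh hup
    (fun s hs hF => hFp s (Fin.val_ne_of_ne hs) (fevenSupport_of_apply_ne_zero hF))
    (Feven_apply_ne_zero hlam hmu hγ₁ hγ₂ hpt ht ht')
    fun s hs => hFu s (fevenSupport_of_apply_ne_zero hs)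

/-- Row `7` of `Feven` has two entries; here the second one meets `h₆₆ = h₇₇ = 1` and the two
`γ₃`-terms cancel. -/
theorem Feven_stab_apply_i3_i6 (hh : h ∈ grpStab (Feven k m lam mu γ₁ γ₂ γ₃)) (hγ₂ : γ₂ ≠ 0) :
    h (i3 k m) (i6 k m) = 0 := by
  have e := mul_apply_eq_of_mem_grpStab hh (p := i7 k m) (q := i6 k m) (by simp [Fin.lt_def])
  rw [mul_apply, Fintype.sum_eq_add (i3 k m) (i6 k m)
      (by simp only [ne_eq, Fin.ext_iff, i3_val, i6_val]; omega), mul_apply,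
    Fintype.sum_eq_single (i7 k m), Feven_apply_row7_col3 rfl rfl,
    Feven_apply_row7_col6 rfl rfl, hh.1.2, hh.1.2] at e
  · simpa [hγ₂] using e
  · intro s hs
    rw [Feven_apply_eq_zero, mul_zero]
    simp only [FevenSupport, i6_val]
    simp only [ne_eq, Fin.ext_iff, i7_val] at hs
    omega
  · rintro s ⟨hs3, hs6⟩
    rw [Feven_apply_eq_zero, zero_mul]
    simp only [FevenSupport, i7_val]
    simp only [ne_eq, Fin.ext_iff, i3_val, i6_val] at hs3 hs6
    omega

theorem Feven_stab_gamma_mul_apply (hh : h ∈ grpStab (Feven k m lam mu γ₁ γ₂ γ₃)) :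
    γ₁ * h (i2 k m) (i3 k m) = γ₂ * h (i6 k m) (i7 k m) := by
  have e := mul_apply_eq_of_mem_grpStab hh (p := i6 k m) (q := i3 k m) (by simp [Fin.lt_def])
  rw [mul_apply, Fintype.sum_eq_single (i2 k m), mul_apply, Fintype.sum_eq_single (i7 k m),
    Feven_apply_row6_col2 rfl rfl, Feven_apply_row7_col3 rfl rfl, mul_comm (h _ _)] at e
  · exact e
  · intro s hs
    rw [Feven_apply_eq_zero, mul_zero]
    simp only [FevenSupport, i3_val]
    simp only [ne_eq, Fin.ext_iff, i7_val] at hs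
    omega
  · intro s hs
    rw [Feven_apply_eq_zero, zero_mul]
    simp only [FevenSupport, i6_val]
    simp only [ne_eq, Fin.ext_iff, i2_val] at hs
    omega

theorem Feven_stab_apply_eq_zero (hh : h ∈ grpStab (Feven k m lam mu γ₁ γ₂ γ₃))
    (hlam : ∀ i : Fin k, i.val + 1 < k → lam i ≠ 0) (hmu : ∀ j, mu j ≠ 0) (hγ₁ : γ₁ ≠ 0)
    (hγ₂ : γ₂ ≠ 0) {t u : Fin (2*(k+m+2))} (htu : t < u) (hP : ¬StabSupport k m t u) :
    h t u = 0 := by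
  have row := Feven_stab_apply_eq_zero_of_row hh hlam hmu hγ₁ hγ₂ (t := t) (u := u)
  have col := Feven_stab_apply_eq_zero_of_col hh hlam hmu hγ₁ hγ₂ (t := t) (u := u)
  unfold StabSupport at hP
  rw [Fin.lt_def] at htu
  by_cases hdiag : t.val = m+1 ∧ u.val = m+2*k+2
  · obtain ⟨rfl, rfl⟩ : t = i3 k m ∧ u = i6 k m := ⟨Fin.ext hdiag.1, Fin.ext hdiag.2⟩
    exact Feven_stab_apply_i3_i6 hh hγ₂
  -- Compare row `p` of `F h = h F` at column `u`, where `F` has its entry of column `t`, when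
  -- `u < p`; otherwise compare column `q` at row `t`, where `F` has its entry of row `u`.
  by_cases h2 : t.val = m ∧ u.val < m+2*k+2
  · refine row (m+2*k+2) ?_ ?_ ?_ ?_ ?_ ?_ ?_ <;> intros <;> unfold FevenSupport at * <;> omega
  by_cases h3 : t.val = m+1 ∧ u.val < m+2*k+2
  · refine row (m+2*k+3) ?_ ?_ ?_ ?_ ?_ ?_ ?_ <;> intros <;> unfold FevenSupport at * <;> omega
  by_cases h14 : (t.val < m ∨ m+2 ≤ t.val ∧ t.val < m+k+2) ∧ t.val + u.val < 2*m+2*k+3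
  · refine row (2*m+2*k+3-t) ?_ ?_ ?_ ?_ ?_ ?_ ?_ <;> intros <;> unfold FevenSupport at * <;>
      omega
  by_cases h6 : u.val = m+2*k+2
  · refine col m ?_ ?_ ?_ ?_ ?_ <;> intros <;> unfold FevenSupport at * <;> omega
  by_cases h7 : u.val = m+2*k+3
  · refine col (m+1) ?_ ?_ ?_ ?_ ?_ <;> intros <;> unfold FevenSupport at * <;> omega
  · refine col (2*m+2*k+3-u) ?_ ?_ ?_ ?_ ?_ <;> intros <;> unfold FevenSupport at * <;> omega

theorem Feven_stab_isStabShaped (hh : h ∈ grpStab (Feven k m lam mu γ₁ γ₂ γ₃))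
    (hlam : ∀ i : Fin k, i.val + 1 < k → lam i ≠ 0) (hmu : ∀ j, mu j ≠ 0) (hγ₁ : γ₁ ≠ 0)
    (hγ₂ : γ₂ ≠ 0) : IsStabShaped k m h := by
  intro a b hab
  by_contra hP
  apply hab
  rcases lt_trichotomy a b with hlt | rfl | hgt
  · rw [Matrix.sub_apply, one_apply_ne hlt.ne,
      Feven_stab_apply_eq_zero hh hlam hmu hγ₁ hγ₂ hlt hP, sub_zero]
  · rw [Matrix.sub_apply, one_apply_eq, hh.1.2, sub_self]
  · rw [Matrix.sub_apply, one_apply_ne hgt.ne', hh.1.1 a b hgt, sub_zero]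

end StabilizerShape

section Conjugate

variable {k m : ℕ} {x h : MS k m}

theorem conj_apply_eq_zero (hx : IsUnitriangular x) (hS : IsStabShaped k m h) (p q : ℕ)
    (hq : q < 2*(k+m+2)) (hpq : p < q) (hout : ∀ a b, StabSupport k m a b → a < p ∨ q < b) :
    (x * h * x⁻¹) ⟨p, hpq.trans hq⟩ ⟨q, hq⟩ = 0 := by
  rw [hx.mul_mul_inv_apply_of_ne h (Fin.ne_of_val_ne hpq.ne)]
  refine mul_mul_apply_eq_zero hx.isUpperTriangular hx.inv.isUpperTriangular fun a b hpa hbq => ?_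
  by_contra hN
  have := hout a b (hS a b hN)
  have hpa : p ≤ a.val := hpa
  have hbq : b.val ≤ q := hbq
  omega

theorem conj_apply_i2 (hx : IsUnitriangular x) (hS : IsStabShaped k m h)
    {s : Fin (2*(k+m+2))} (hs : m + 1 ≤ s.val) (hs' : s.val ≤ m+k+1) :
    (x * h * x⁻¹) (i2 k m) s = h (i2 k m) (i3 k m) * x⁻¹ (i3 k m) s := by
  rw [hx.mul_mul_inv_apply_of_ne h (Fin.ne_of_val_ne (by simp; omega)),
    mul_mul_apply_eq_single hx.isUpperTriangular hx.inv.isUpperTriangular (i2 k m) (i3 k m),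
    hx.2, one_mul, Matrix.sub_apply, one_apply_ne (Fin.ne_of_val_ne (by simp)), sub_zero]
  intro a b ha hb hN
  have := hS a b hN
  unfold StabSupport at this
  simp only [Fin.le_def, i2_val] at ha hb
  simp only [Fin.ext_iff, i2_val, i3_val]
  omega

theorem conj_apply_i7 (hx : IsUnitriangular x) (hS : IsStabShaped k m h)
    {p : Fin (2*(k+m+2))} (hp : m+k+2 ≤ p.val) (hp' : p.val ≤ m+2*k+2) :
    (x * h * x⁻¹) p (i7 k m) = x p (i6 k m) * h (i6 k m) (i7 k m) := by
  rw [hx.mul_mul_inv_apply_of_ne h (Fin.ne_of_val_ne (by simp; omega)),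
    mul_mul_apply_eq_single hx.isUpperTriangular hx.inv.isUpperTriangular (i6 k m) (i7 k m),
    hx.inv.2, mul_one, Matrix.sub_apply, one_apply_ne (Fin.ne_of_val_ne (by simp)), sub_zero]
  intro a b ha hb hN
  have := hS a b hN
  unfold StabSupport at this
  simp only [Fin.le_def, i7_val] at ha hb
  simp only [Fin.ext_iff, i6_val, i7_val]
  omega

theorem conj_apply_of_block4_of_block5 (hx : IsUnitriangular x) (hS : IsStabShaped k m h)
    {p q : Fin (2*(k+m+2))} (hp : m+1 ≤ p.val) (hp' : p.val ≤ m+k+1) (hq : m+k+2 ≤ q.val)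
    (hq' : q.val ≤ m+2*k+2) :
    (x * h * x⁻¹) p q =
      ∑ i, x p (r4 k m i) * h (r4 k m i) (r4 k m i).rev * x⁻¹ (r4 k m i).rev q := by
  rw [hx.mul_mul_inv_apply_of_ne h (Fin.ne_of_val_ne (by omega)),
    mul_mul_apply_eq_sum hx.isUpperTriangular hx.inv.isUpperTriangular (r4 k m)
      (fun i => (r4 k m i).rev) r4_injective]
  · refine Finset.sum_congr rfl fun i _ => ?_
    rw [Matrix.sub_apply, one_apply_ne (Fin.ne_of_val_ne (by simp; omega)), sub_zero]
  · intro a b ha hb hN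
    have := hS a b hN
    unfold StabSupport at this
    exact ⟨⟨a - (m+2), by omega⟩, Fin.ext (by simp; omega), Fin.ext (by simp; omega)⟩

theorem det_submatrix_conj_eq_zero_of_rows (hx : IsUnitriangular x) (hS : IsStabShaped k m h)
    {d : ℕ} (r c : Fin d → Fin (2*(k+m+2))) (lo hi : ℕ)
    (hrc : ∀ a ∈ Set.range r, ∀ b ∈ Set.range c, a.val ≠ b.val)
    (hr : ∀ a ∈ Set.range r, lo ≤ a.val) (hc : ∀ b ∈ Set.range c, b.val ≤ hi)
    (T : Finset ℕ) (hT : T.card < d)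
    (hsupp : ∀ s b, s ∉ T → lo ≤ s → StabSupport k m s b → hi < b) :
    ((x * h * x⁻¹).submatrix r c).det = 0 := by
  rw [hx.submatrix_mul_mul_inv_of_ne h r c fun i j hij =>
    hrc _ ⟨i, rfl⟩ _ ⟨j, rfl⟩ (congrArg Fin.val hij)]
  refine det_submatrix_mul_mul_eq_zero_of_rows hx.isUpperTriangular hx.inv.isUpperTriangular r c
    _ ((Fin.card_filter_val_mem_le T).trans_lt hT) fun s hs => ?_
  by_cases hlo : s.val < lo
  · exact .inl fun i => by have := hr _ ⟨i, rfl⟩; omega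
  · refine .inr fun j b hb => ?_
    have := hc _ ⟨j, rfl⟩
    have := hsupp s b (by simpa using hs) (by omega) (hS s b hb)
    omega

theorem det_submatrix_conj_eq_zero_of_cols (hx : IsUnitriangular x) (hS : IsStabShaped k m h)
    {d : ℕ} (r c : Fin d → Fin (2*(k+m+2))) (lo hi : ℕ)
    (hrc : ∀ a ∈ Set.range r, ∀ b ∈ Set.range c, a.val ≠ b.val)
    (hr : ∀ a ∈ Set.range r, lo ≤ a.val) (hc : ∀ b ∈ Set.range c, b.val ≤ hi)
    (T : Finset ℕ) (hT : T.card < d)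
    (hsupp : ∀ a s, s ∉ T → s ≤ hi → StabSupport k m a s → a < lo) :
    ((x * h * x⁻¹).submatrix r c).det = 0 := by
  rw [hx.submatrix_mul_mul_inv_of_ne h r c fun i j hij =>
    hrc _ ⟨i, rfl⟩ _ ⟨j, rfl⟩ (congrArg Fin.val hij)]
  refine det_submatrix_mul_mul_eq_zero_of_cols hx.isUpperTriangular hx.inv.isUpperTriangular r c
    _ ((Fin.card_filter_val_mem_le T).trans_lt hT) fun s hs => ?_
  by_cases hhi : hi < s.val
  · exact .inl fun j => by have := hc _ ⟨j, rfl⟩; omega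
  · refine .inr fun i a ha => ?_
    have := hr _ ⟨i, rfl⟩
    have := hsupp a s (by simpa using hs) (by omega) (hS a s ha)
    omega

theorem det_minor14_conj_eq_zero (hx : IsUnitriangular x) (hS : IsStabShaped k m h) (a : Fin m)
    (b : Fin k) : ((x * h * x⁻¹).submatrix ![r1 k m a, i2 k m] ![i3 k m, r4 k m b]).det = 0 :=
  det_submatrix_conj_eq_zero_of_rows hx hS _ _ a (m+2+b) (by simp; grind) (by simp)
    (by simp; grind) {m} (by simp) fun s b' hs _ hP => by
      simp only [Finset.mem_singleton] at hs; unfold StabSupport at hP; omega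

theorem det_minor16_conj_eq_zero (hx : IsUnitriangular x) (hS : IsStabShaped k m h) (a : Fin m) :
    ((x * h * x⁻¹).submatrix (Fin.cons (r1 k m a) (Fin.cons (i2 k m) (r4 k m)))
      (Fin.snoc (Fin.cons (i3 k m) (c5 k m)) (i6 k m))).det = 0 :=
  det_submatrix_conj_eq_zero_of_rows hx hS _ _ a (m+2*k+2) (by simp; grind) (by simp; grind)
    (by simp; grind) (insert m (Finset.Ico (m+2) (m+k+2))) (by simp) fun s b hs _ hP => by
      simp only [Finset.mem_insert, Finset.mem_Ico] at hs; unfold StabSupport at hP; omega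

theorem det_minor36_conj_eq_zero (hx : IsUnitriangular x) (hS : IsStabShaped k m h) :
    ((x * h * x⁻¹).submatrix (Fin.cons (i3 k m) (r4 k m)) (Fin.snoc (c5 k m) (i6 k m))).det = 0 :=
  det_submatrix_conj_eq_zero_of_rows hx hS _ _ (m+1) (m+2*k+2) (by simp; grind) (by simp; grind)
    (by simp; grind) (Finset.Ico (m+2) (m+k+2)) (by simp) fun s b hs _ hP => by
      simp only [Finset.mem_Ico] at hs; unfold StabSupport at hP; omega

theorem det_minor38_conj_eq_zero (hx : IsUnitriangular x) (hS : IsStabShaped k m h) (b : Fin m) :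
    ((x * h * x⁻¹).submatrix (Fin.cons (i3 k m) (Fin.snoc (r4 k m) (i6 k m)))
      (Fin.snoc (Fin.snoc (c5 k m) (i7 k m)) (c8 k m b))).det = 0 :=
  det_submatrix_conj_eq_zero_of_cols hx hS _ _ (m+1) (m+2*k+4+b) (by simp; grind)
    (by simp; grind) (by simp; grind) (insert (m+2*k+3) (Finset.Ico (m+k+2) (m+2*k+2)))
    (by simp; omega) fun a s hs _ hP => by
      simp only [Finset.mem_insert, Finset.mem_Ico] at hs; unfold StabSupport at hP; omega

theorem det_minor58_conj_eq_zero (hx : IsUnitriangular x) (hS : IsStabShaped k m h) (a : Fin k)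
    (b : Fin m) : ((x * h * x⁻¹).submatrix ![c5 k m a, i6 k m] ![i7 k m, c8 k m b]).det = 0 :=
  det_submatrix_conj_eq_zero_of_cols hx hS _ _ (m+k+2+a) (m+2*k+4+b) (by simp; grind)
    (by simp; grind) (by simp; grind) {m+2*k+3} (by simp) fun a' s hs _ hP => by
      simp only [Finset.mem_singleton] at hs; unfold StabSupport at hP; omega

theorem inv_mul_row3_block4 (hx : IsUnitriangular x) (i : Fin k) :
    x⁻¹ (i3 k m) (i3 k m) * x (i3 k m) (r4 k m i)
      + ∑ t, x⁻¹ (i3 k m) (r4 k m t) * x (r4 k m t) (r4 k m i) = 0 := by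
  have e := congrFun (congrFun hx.inv_mul (i3 k m)) (r4 k m i)
  rw [one_apply_ne (Fin.ne_of_val_ne (by simp only [i3_val, r4_val]; omega)),
    mul_apply_eq_sum hx.inv.isUpperTriangular hx.isUpperTriangular
      (Fin.cons (i3 k m) (r4 k m) : Fin (k+1) → Fin (2*(k+m+2)))
      (Fin.cons_injective_iff.2 ⟨fun ⟨j, hj⟩ => by simp [Fin.ext_iff] at hj; omega, r4_injective⟩),
    Fin.sum_univ_succ] at e
  · simpa using e
  · intro s hs hs'
    simp only [Fin.le_def, i3_val, r4_val] at hs hs'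
    by_cases h3 : s.val = m + 1
    · exact ⟨0, Fin.ext (by simp [h3])⟩
    · exact ⟨Fin.succ ⟨s - (m+2), by omega⟩, Fin.ext (by rw [Fin.cons_succ]; simp; omega)⟩

theorem inv_mul_block5_col6 (hx : IsUnitriangular x) (i : Fin k) :
    ∑ t, x⁻¹ (r4 k m i).rev (c5 k m t) * x (c5 k m t) (i6 k m)
      + x⁻¹ (r4 k m i).rev (i6 k m) * x (i6 k m) (i6 k m) = 0 := by
  have e := congrFun (congrFun hx.inv_mul (r4 k m i).rev) (i6 k m)
  rw [one_apply_ne (Fin.ne_of_val_ne (by simp; omega)),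
    mul_apply_eq_sum hx.inv.isUpperTriangular hx.isUpperTriangular
      (Fin.snoc (c5 k m) (i6 k m) : Fin (k+1) → Fin (2*(k+m+2)))
      (Fin.snoc_injective_iff.2
        ⟨c5_injective, fun ⟨j, hj⟩ => by simp [Fin.ext_iff] at hj; omega⟩),
    Fin.sum_univ_castSucc] at e
  · simpa using e
  · intro s hs hs'
    simp only [Fin.le_def, Fin.val_rev, r4_val, i6_val] at hs hs'
    by_cases h6 : s.val = m + 2 * k + 2
    · exact ⟨Fin.last k, Fin.ext (by simp [h6])⟩
    · exact ⟨Fin.castSucc ⟨s - (m+k+2), by omega⟩,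
        Fin.ext (by rw [Fin.snoc_castSucc]; simp; omega)⟩

theorem conj_row2_mul_col5_eq_zero (hx : IsUnitriangular x) (hS : IsStabShaped k m h)
    (b : Fin k) :
    (x * h * x⁻¹) (i2 k m) (i3 k m) * (x * h * x⁻¹) (i3 k m) (c5 k m b)
      + ∑ t, (x * h * x⁻¹) (i2 k m) (r4 k m t) * (x * h * x⁻¹) (r4 k m t) (c5 k m b) = 0 := by
  have hrow : ∀ t, (x * h * x⁻¹) (i2 k m) (r4 k m t) =
      h (i2 k m) (i3 k m) * x⁻¹ (i3 k m) (r4 k m t) :=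
    fun t => conj_apply_i2 hx hS (by simp; omega) (by simp; omega)
  have hcol : ∀ t, (x * h * x⁻¹) (r4 k m t) (c5 k m b) =
      ∑ i, x (r4 k m t) (r4 k m i) * h (r4 k m i) (r4 k m i).rev * x⁻¹ (r4 k m i).rev (c5 k m b) :=
    fun t => conj_apply_of_block4_of_block5 hx hS (by simp; omega) (by simp; omega) (by simp)
      (by simp; omega)
  rw [conj_apply_i2 hx hS (by simp) (by simp), conj_apply_of_block4_of_block5 hx hS (by simp)
    (by simp) (by simp) (by simp; omega)]
  simp only [hrow, hcol, Finset.mul_sum]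
  rw [Finset.sum_comm, ← Finset.sum_add_distrib]
  refine Finset.sum_eq_zero fun i _ => ?_
  calc _ = h (i2 k m) (i3 k m) * (h (r4 k m i) (r4 k m i).rev * x⁻¹ (r4 k m i).rev (c5 k m b))
        * (x⁻¹ (i3 k m) (i3 k m) * x (i3 k m) (r4 k m i)
          + ∑ t, x⁻¹ (i3 k m) (r4 k m t) * x (r4 k m t) (r4 k m i)) := by
        rw [mul_add (h (i2 k m) (i3 k m) * _), Finset.mul_sum]
        congr 1
        · ring
        · exact Finset.sum_congr rfl fun t _ => by ring
    _ = 0 := by rw [inv_mul_row3_block4 hx i, mul_zero]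

theorem conj_row4_mul_col7_eq_zero (hx : IsUnitriangular x) (hS : IsStabShaped k m h)
    (a : Fin k) :
    (∑ t, (x * h * x⁻¹) (r4 k m a) (c5 k m t) * (x * h * x⁻¹) (c5 k m t) (i7 k m))
      + (x * h * x⁻¹) (r4 k m a) (i6 k m) * (x * h * x⁻¹) (i6 k m) (i7 k m) = 0 := by
  have hrow : ∀ t, (x * h * x⁻¹) (r4 k m a) (c5 k m t) =
      ∑ i, x (r4 k m a) (r4 k m i) * h (r4 k m i) (r4 k m i).rev * x⁻¹ (r4 k m i).rev (c5 k m t) :=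
    fun t => conj_apply_of_block4_of_block5 hx hS (by simp; omega) (by simp; omega) (by simp)
      (by simp; omega)
  have hcol : ∀ t, (x * h * x⁻¹) (c5 k m t) (i7 k m) =
      x (c5 k m t) (i6 k m) * h (i6 k m) (i7 k m) :=
    fun t => conj_apply_i7 hx hS (by simp) (by simp; omega)
  rw [conj_apply_of_block4_of_block5 hx hS (by simp; omega) (by simp; omega) (by simp; omega)
      (by simp), conj_apply_i7 hx hS (by simp; omega) (by simp)]
  simp only [hrow, hcol, Finset.sum_mul]
  rw [Finset.sum_comm, ← Finset.sum_add_distrib]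
  refine Finset.sum_eq_zero fun i _ => ?_
  calc _ = x (r4 k m a) (r4 k m i) * h (r4 k m i) (r4 k m i).rev * h (i6 k m) (i7 k m)
        * (∑ t, x⁻¹ (r4 k m i).rev (c5 k m t) * x (c5 k m t) (i6 k m)
          + x⁻¹ (r4 k m i).rev (i6 k m) * x (i6 k m) (i6 k m)) := by
        rw [mul_add (x (r4 k m a) (r4 k m i) * _ * _), Finset.mul_sum]
        congr 1
        · exact Finset.sum_congr rfl fun t _ => by ring
        · ring
    _ = 0 := by rw [inv_mul_block5_col6 hx i, mul_zero]

theorem conj_gamma_sub_eq_zero (hx : IsUnitriangular x) (hS : IsStabShaped k m h) {γ₁ γ₂ : ℝ}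
    (hrel : γ₁ * h (i2 k m) (i3 k m) = γ₂ * h (i6 k m) (i7 k m)) :
    γ₁ * (x * h * x⁻¹) (i2 k m) (i3 k m) - γ₂ * (x * h * x⁻¹) (i6 k m) (i7 k m) = 0 := by
  rw [conj_apply_i2 hx hS (by simp) (by simp), conj_apply_i7 hx hS (by simp; omega) (by simp),
    hx.2, hx.inv.2, mul_one, one_mul, hrel, sub_self]

end Conjugate

theorem orbit_subset_annihilator_even_general (k m : ℕ)
    (lam : Fin k → ℝ) (hlam : ∀ i : Fin k, i.val + 1 < k → lam i ≠ 0)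
    (mu : Fin m → ℝ) (hmu : ∀ j : Fin m, mu j ≠ 0)
    (γ₁ γ₂ γ₃ : ℝ) (hγ₁ : γ₁ ≠ 0) (hγ₂ : γ₂ ≠ 0) :
    ∀ x h : MS k m, IsUnitriangular x →
      h ∈ grpStab (Feven k m lam mu γ₁ γ₂ γ₃) →
      dEven k m (x * h * x⁻¹) ≠ 0 →
      ∀ φ ∈ SEven k m γ₁ γ₂, φ (x * h * x⁻¹) = 0 := by
  intro x h hx hh _ φ hφ
  have hS := Feven_stab_isStabShaped hh hlam hmu hγ₁ hγ₂
  have entry := conj_apply_eq_zero hx hS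
  simp only [SEven, Set.mem_union, Set.mem_range, Set.mem_singleton_iff, Prod.exists,
    or_assoc] at hφ
  rcases hφ with ⟨a, b, hab, rfl⟩ | ⟨a, b, hab, rfl⟩ | ⟨a, b, hab, rfl⟩ | ⟨a, b, hab, rfl⟩ |
    ⟨a, rfl⟩ | ⟨a, b, rfl⟩ | ⟨a, rfl⟩ | ⟨b, rfl⟩ | rfl | ⟨b, rfl⟩ | ⟨a, rfl⟩ | ⟨a, b, rfl⟩ |
    ⟨b, rfl⟩ | ⟨b, rfl⟩ | ⟨a, rfl⟩ | rfl
  · exact entry a b (by omega) hab fun _ _ hP => by unfold StabSupport at hP; omega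
  · exact entry (m+2+a) (m+2+b) (by omega) (by omega) fun _ _ hP => by
      unfold StabSupport at hP; omega
  · exact entry (m+k+2+a) (m+k+2+b) (by omega) (by omega) fun _ _ hP => by
      unfold StabSupport at hP; omega
  · exact entry (m+2*k+4+a) (m+2*k+4+b) (by omega) (by omega) fun _ _ hP => by
      unfold StabSupport at hP; omega
  · exact entry a m (by omega) a.isLt fun _ _ hP => by unfold StabSupport at hP; omega
  · simp only [det_minor14_conj_eq_zero hx hS, neg_zero, zero_div]
  · simp only [det_minor16_conj_eq_zero hx hS, mul_zero, zero_div]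
  · exact entry (m+1) (m+2+b) (by omega) (by omega) fun _ _ hP => by
      unfold StabSupport at hP; omega
  · simp only [det_minor36_conj_eq_zero hx hS, mul_zero, zero_div]
  · simp only [det_minor38_conj_eq_zero hx hS, mul_zero, zero_div]
  · exact entry (m+k+2+a) (m+2*k+2) (by omega) (by omega) fun _ _ hP => by
      unfold StabSupport at hP; omega
  · simp only [det_minor58_conj_eq_zero hx hS, neg_zero, zero_div]
  · exact entry (m+2*k+3) (m+2*k+4+b) (by omega) (by omega) fun _ _ hP => by
      unfold StabSupport at hP; omega
  · exact conj_row2_mul_col5_eq_zero hx hS b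
  · exact conj_row4_mul_col7_eq_zero hx hS a
  · exact conj_gamma_sub_eq_zero hx hS (Feven_stab_gamma_mul_apply hh)

/-- Proposition (even case), inclusion part: every point of `Ad_G(G^f)` at which
`d` does not vanish annihilates all functions of `S`. -/
theorem orbit_subset_annihilator_even (k m : ℕ) (hk : 1 ≤ k) (hm : 1 ≤ m)
    (lam : Fin k → ℝ) (hlam : ∀ i : Fin k, i.val + 1 < k → lam i ≠ 0)
    (mu : Fin m → ℝ) (hmu : ∀ j : Fin m, mu j ≠ 0)
    (γ₁ γ₂ γ₃ : ℝ) (hγ₁ : γ₁ ≠ 0) (hγ₂ : γ₂ ≠ 0) :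
    ∀ x h : MS k m, IsUnitriangular x →
      h ∈ grpStab (Feven k m lam mu γ₁ γ₂ γ₃) →
      dEven k m (x * h * x⁻¹) ≠ 0 →
      ∀ φ ∈ SEven k m γ₁ γ₂, φ (x * h * x⁻¹) = 0 :=
  orbit_subset_annihilator_even_general k m lam hlam mu hmu γ₁ γ₂ γ₃ hγ₁ hγ₂

end
end

section
/- Let k ≥ 1, let 𝔤 = ut(2k,ℝ), and let f be the linear functional on 𝔤 given by f(x) = trace(F·x), where F is the 2k×2k matrix whose only nonzero entries are λ_1,…,λ_k placed on the antidiagonal of its lower-left k×k block (λ_1 in the lower-left corner of that block, λ_k in its upper-right corner), with λ_1,…,λ_{k−1} ≠ 0. Let 𝔭 = {x ∈ ut(2k,ℝ) : x_{ab} = 0 unless a ≤ k < b} (strictly upper-right k×k block). Then 𝔭 is an abelian Lie subalgebra of 𝔤 of dimension k², the form B_f(x,y) = f(⁅x,y⁆) vanishes identically on 𝔭, and 𝔭 is a polarization of f: every linear subspace W of 𝔤 containing 𝔭 on which B_f vanishes identically equals 𝔭. -/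
open Matrix

noncomputable section

/-- The subspace `𝔭` of `ut(2k,ℝ)` of matrices supported in the strictly upper-right
`k×k` block. -/
def pol (k : ℕ) : Submodule ℝ (Matrix (Fin (2*k)) (Fin (2*k)) ℝ) where
  carrier := {x | ∀ a b : Fin (2*k), ¬(a.val < k ∧ k ≤ b.val) → x a b = 0}
  add_mem' := by
    intro x y hx hy a b h
    simp only [Matrix.add_apply, hx a b h, hy a b h, add_zero]
  zero_mem' := by
    intro a b _
    rfl
  smul_mem' := by
    intro c x hx a b h
    simp only [Matrix.smul_apply, hx a b h, smul_zero]

/-- The matrix `F` of the regular functional on `ut(2k,ℝ)`:  `λ₁,…,λ_k` on the antidiagonal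
of the lower-left `k×k` block, with `λ₁` in the lower-left corner and `λ_k` in the
upper-right corner of that block. -/
def Freg (k : ℕ) (lam : Fin k → ℝ) : Matrix (Fin (2*k)) (Fin (2*k)) ℝ :=
  ∑ i : Fin k, lam i • Matrix.single
      (⟨2*k-1-i.val, by have := i.isLt; omega⟩ : Fin (2*k))
      (⟨i.val, by have := i.isLt; omega⟩ : Fin (2*k)) (1:ℝ)

/-!
Write `E c d` for the matrix unit `single c d 1`, so that `f M = ∑ᵢ λᵢ M i (rev i)` with
`rev i = 2k-1-i`. The nonzero entries of a matrix in `𝔭` have rows `< k` and columns `≥ k`, so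
any product of two such matrices vanishes. For maximality, pairing `x` with
`E c d ∈ 𝔭` gives `f ⁅x, E c d⁆ = λ_{rev d} x_{rev d, c} - λ_c x_{d, rev c}`. An entry `x a b`
with `a < b` in the same half is isolated by `(c, d) = (b, rev a)` or `(rev b, a)`: the other
term of the identity is the entry at `(rev a, rev b)`, below the diagonal, and the weight of
`x a b` is some `λᵢ` with `i < k - 1`.
-/

theorem Fin.card_subtype_val_lt (n m : ℕ) : Fintype.card {a : Fin n // a.val < m} = min n m := by
  rw [Fintype.card_subtype, Fin.card_filter_val_lt]

theorem Fin.card_subtype_le_val (n m : ℕ) : Fintype.card {a : Fin n // m ≤ a.val} = n - m := by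
  simp_rw [← not_lt]
  rw [Fintype.card_subtype_compl, Fin.card_subtype_val_lt, Fintype.card_fin]
  omega

namespace Matrix

variable {m n R : Type*}

section blockSubmodule

variable [Semiring R] (p : m → Prop) (q : n → Prop)

def blockSubmodule : Submodule R (Matrix m n R) where
  carrier := {x | ∀ i j, ¬(p i ∧ q j) → x i j = 0}
  add_mem' hx hy i j h := by simp [hx i j h, hy i j h]
  zero_mem' _ _ _ := rfl
  smul_mem' c x hx i j h := by simp [hx i j h]

def blockSubmoduleEquiv [DecidablePred p] [DecidablePred q] :
    blockSubmodule (R := R) p q ≃ₗ[R] Matrix {i // p i} {j // q j} R where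
  toFun x := x.1.submatrix Subtype.val Subtype.val
  invFun B := ⟨fun i j => if h : p i ∧ q j then B ⟨i, h.1⟩ ⟨j, h.2⟩ else 0,
    fun _ _ h => dif_neg h⟩
  map_add' _ _ := rfl
  map_smul' _ _ := rfl
  left_inv x := by
    ext i j
    by_cases h : p i ∧ q j
    · simp [h]
    · simp [h, x.2 i j h]
  right_inv B := by
    ext i j
    exact dif_pos ⟨i.2, j.2⟩

theorem finrank_blockSubmodule [StrongRankCondition R] [Fintype m] [Fintype n]
    [DecidablePred p] [DecidablePred q] :
    Module.finrank R (blockSubmodule (R := R) p q) =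
      Fintype.card {i // p i} * Fintype.card {j // q j} := by
  rw [(blockSubmoduleEquiv p q).finrank_eq, Module.finrank_matrix, Module.finrank_self, mul_one]

theorem mul_eq_zero_of_mem_blockSubmodule [Fintype n] {p q : n → Prop} (hpq : ∀ i, q i → ¬p i)
    {x y : Matrix n n R} (hx : x ∈ blockSubmodule p q) (hy : y ∈ blockSubmodule p q) :
    x * y = 0 := by
  ext a b
  rw [mul_apply, zero_apply]
  refine Finset.sum_eq_zero fun i _ => ?_
  by_cases hi : q i
  · rw [hy i b fun h => hpq i hi h.1, mul_zero]
  · rw [hx a i fun h => hi h.2, zero_mul]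

end blockSubmodule

theorem trace_mul_commutator_single [CommRing R] [Fintype n] [DecidableEq n]
    (F x : Matrix n n R) (c d : n) :
    trace (F * (x * single c d 1 - single c d 1 * x)) = (F * x) d c - (x * F) d c := by
  have h₁ : trace (F * (x * single c d 1)) = (F * x) d c := by
    rw [← Matrix.mul_assoc, trace_mul_single, MulOpposite.op_one, one_smul]
  have h₂ : trace (F * (single c d 1 * x)) = (x * F) d c := by
    rw [← Matrix.mul_assoc, trace_mul_comm, ← Matrix.mul_assoc, trace_mul_single,
      MulOpposite.op_one, one_smul]
  rw [mul_sub, trace_sub, h₁, h₂]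

end Matrix

section pol

variable {k : ℕ}

theorem pol_eq_blockSubmodule :
    pol k = Matrix.blockSubmodule (fun a : Fin (2 * k) => a.val < k) (fun b => k ≤ b.val) := rfl

theorem finrank_pol : Module.finrank ℝ (pol k) = k ^ 2 := by
  rw [pol_eq_blockSubmodule, Matrix.finrank_blockSubmodule, Fin.card_subtype_val_lt,
    Fin.card_subtype_le_val, sq]
  congr 1 <;> omega

theorem isStrictUpper_of_mem_pol {x : Matrix (Fin (2 * k)) (Fin (2 * k)) ℝ} (hx : x ∈ pol k) :
    IsStrictUpper x :=
  fun i j hji => hx i j fun h => by omega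

theorem single_mem_pol {c d : Fin (2 * k)} (hc : c.val < k) (hd : k ≤ d.val) :
    single c d (1 : ℝ) ∈ pol k :=
  fun _ _ h => Matrix.single_apply_of_ne _ _ _ _ _ fun ⟨hca, hdb⟩ => h (hca ▸ hdb ▸ ⟨hc, hd⟩)

theorem mul_eq_zero_of_mem_pol {x y : Matrix (Fin (2 * k)) (Fin (2 * k)) ℝ} (hx : x ∈ pol k)
    (hy : y ∈ pol k) : x * y = 0 := by
  rw [pol_eq_blockSubmodule] at hx hy
  exact Matrix.mul_eq_zero_of_mem_blockSubmodule (fun _ hi => not_lt.2 hi) hx hy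

end pol

section Freg

variable {k : ℕ} (lam : Fin k → ℝ) (x : Matrix (Fin (2 * k)) (Fin (2 * k)) ℝ)

theorem Freg_mul_apply (c d : Fin (2 * k)) (hd : k ≤ d.val) :
    (Freg k lam * x) d c = lam ⟨d.rev, by rw [Fin.val_rev]; omega⟩ * x d.rev c := by
  simp only [Freg, Finset.sum_mul, Matrix.sum_apply, Matrix.smul_mul, Matrix.smul_apply, smul_eq_mul]
  rw [Finset.sum_eq_single ⟨d.rev, by rw [Fin.val_rev]; omega⟩]
  · have hrow : (⟨2 * k - 1 - d.rev.val, by omega⟩ : Fin (2 * k)) = d := by ext; simp; omega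
    rw [hrow, single_mul_apply_same, one_mul]
  · intro i _ hi
    rw [single_mul_apply_of_ne, mul_zero]
    intro h
    exact hi (Fin.ext (by simp [Fin.ext_iff] at h ⊢; omega))
  · simp

theorem mul_Freg_apply (c d : Fin (2 * k)) (hc : c.val < k) :
    (x * Freg k lam) d c = lam ⟨c, hc⟩ * x d c.rev := by
  simp only [Freg, Finset.mul_sum, Matrix.sum_apply, Matrix.mul_smul, Matrix.smul_apply, smul_eq_mul]
  rw [Finset.sum_eq_single ⟨c, hc⟩, mul_single_apply_same, mul_one]
  · congr 2
    ext; simp; omega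
  · intro i _ hi
    rw [mul_single_apply_of_ne, mul_zero]
    intro h
    exact hi (Fin.ext (by simp [Fin.ext_iff] at h ⊢; omega))
  · simp

theorem lam_mul_apply_eq_of_trace_Freg_commutator_eq_zero {c d : Fin (2 * k)} (hc : c.val < k)
    (hd : k ≤ d.val) (h : trace (Freg k lam * (x * single c d 1 - single c d 1 * x)) = 0) :
    lam ⟨d.rev, by rw [Fin.val_rev]; omega⟩ * x d.rev c = lam ⟨c, hc⟩ * x d c.rev := by
  rwa [Matrix.trace_mul_commutator_single, Freg_mul_apply _ _ _ _ hd, mul_Freg_apply _ _ _ _ hc,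
    sub_eq_zero] at h

theorem mem_pol_of_forall_trace_Freg_commutator_eq_zero
    (hlam : ∀ i : Fin k, i.val + 1 < k → lam i ≠ 0) (hx : IsStrictUpper x)
    (h : ∀ c d : Fin (2 * k), c.val < k → k ≤ d.val →
      trace (Freg k lam * (x * single c d 1 - single c d 1 * x)) = 0) :
    x ∈ pol k := by
  intro a b hab
  rcases le_or_gt b a with hba | hlt
  · exact hx a b hba
  have hrev : x a.rev b.rev = 0 := hx _ _ (Fin.rev_le_rev.2 hlt.le)
  rcases not_and_or.1 hab with ha | hb
  · have key := lam_mul_apply_eq_of_trace_Freg_commutator_eq_zero lam x (c := b.rev) (d := a)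
      (by rw [Fin.val_rev]; omega) (by omega) (h _ _ (by rw [Fin.val_rev]; omega) (by omega))
    rw [hrev, mul_zero, Fin.rev_rev, eq_comm] at key
    exact (mul_eq_zero.1 key).resolve_left (hlam _ (by simp; omega))
  · have key := lam_mul_apply_eq_of_trace_Freg_commutator_eq_zero lam x (c := b) (d := a.rev)
      (by omega) (by rw [Fin.val_rev]; omega) (h _ _ (by omega) (by rw [Fin.val_rev]; omega))
    simp only [Fin.rev_rev, hrev, mul_zero] at key
    exact (mul_eq_zero.1 key).resolve_left (hlam _ (by simp; omega))

end Freg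

theorem polarization_regular_even_general (k : ℕ)
    (lam : Fin k → ℝ) (hlam : ∀ i : Fin k, i.val + 1 < k → lam i ≠ 0) :
    ((pol k : Set (Matrix (Fin (2*k)) (Fin (2*k)) ℝ)) ⊆ {x | IsStrictUpper x}) ∧
    (∀ x ∈ pol k, ∀ y ∈ pol k, x * y - y * x = 0) ∧
    Module.finrank ℝ ↥(pol k) = k^2 ∧
    (∀ x ∈ pol k, ∀ y ∈ pol k, Matrix.trace (Freg k lam * (x * y - y * x)) = 0) ∧
    (∀ W : Submodule ℝ (Matrix (Fin (2*k)) (Fin (2*k)) ℝ), pol k ≤ W →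
      (∀ x ∈ W, IsStrictUpper x) →
      (∀ x ∈ W, ∀ y ∈ W, Matrix.trace (Freg k lam * (x * y - y * x)) = 0) →
      W = pol k) := by
  have abelian : ∀ x ∈ pol k, ∀ y ∈ pol k, x * y - y * x = 0 := fun x hx y hy => by
    rw [mul_eq_zero_of_mem_pol hx hy, mul_eq_zero_of_mem_pol hy hx, sub_zero]
  refine ⟨fun _ => isStrictUpper_of_mem_pol, abelian, finrank_pol, ?_, ?_⟩
  · intro x hx y hy
    rw [abelian x hx y hy, Matrix.mul_zero, trace_zero]
  · intro W hpW hWsu hWB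
    refine le_antisymm (fun x hx => ?_) hpW
    exact mem_pol_of_forall_trace_Freg_commutator_eq_zero lam x hlam (hWsu x hx)
      fun c d hc hd => hWB x hx _ (hpW (single_mem_pol hc hd))

/-- The strictly upper-right `k×k` block `𝔭` is an abelian Lie subalgebra of `ut(2k,ℝ)` of
dimension `k²`, the form `B_f(x,y) = f(⁅x,y⁆)` vanishes identically on `𝔭`, and `𝔭` is a
polarization of the regular functional `f = trace(F·–)`: any subspace of `ut(2k,ℝ)`
containing `𝔭` on which `B_f` vanishes equals `𝔭`. -/
theorem polarization_regular_even (k : ℕ) (hk : 1 ≤ k)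
    (lam : Fin k → ℝ) (hlam : ∀ i : Fin k, i.val + 1 < k → lam i ≠ 0) :
    ((pol k : Set (Matrix (Fin (2*k)) (Fin (2*k)) ℝ)) ⊆ {x | IsStrictUpper x}) ∧
    (∀ x ∈ pol k, ∀ y ∈ pol k, x * y - y * x = 0) ∧
    Module.finrank ℝ ↥(pol k) = k^2 ∧
    (∀ x ∈ pol k, ∀ y ∈ pol k, Matrix.trace (Freg k lam * (x * y - y * x)) = 0) ∧
    (∀ W : Submodule ℝ (Matrix (Fin (2*k)) (Fin (2*k)) ℝ), pol k ≤ W →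
      (∀ x ∈ W, IsStrictUpper x) →
      (∀ x ∈ W, ∀ y ∈ W, Matrix.trace (Freg k lam * (x * y - y * x)) = 0) →
      W = pol k) :=
  polarization_regular_even_general k lam hlam

end
end

section
/- Let k ≥ 1, let 𝔤 = ut(2k+1,ℝ), and let f be the linear functional on 𝔤 given by f(x) = trace(F·x), where F is the (2k+1)×(2k+1) matrix whose only nonzero entries are λ_1,…,λ_k, all nonzero, placed on the antidiagonal of the k×k block occupying rows k+2,…,2k+1 and columns 1,…,k (λ_1 in the lower-left corner of that block, λ_k in its upper-right corner). Let 𝔭 = {x ∈ ut(2k+1,ℝ) : x_{ab} = 0 unless a ≤ k+1 and b ≥ k+2}. Then 𝔭 is an abelian Lie subalgebra of 𝔤 of dimension k²+k, the form B_f(x,y) = f(⁅x,y⁆) vanishes identically on 𝔭, and 𝔭 is a polarization of f: every linear subspace W of 𝔤 containing 𝔭 on which B_f vanishes identically equals 𝔭. -/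
/-!
Write `ī = 2k - i` (`Fin.rev`), so that `f(x) = ∑_{i<k} λ_i x_{i ī}`. Since `𝔭 · 𝔭 = 0`, `𝔭` is
abelian and isotropic. For maximality, let `x` be strictly upper triangular and `B_f`-orthogonal
to `𝔭`, and let `a < b` with `x_{ab}` outside the block of `𝔭`; then `b ≤ k` or `a ≥ k + 1`.
Pairing `x` with `E_{b ā} ∈ 𝔭`, resp. `E_{b̄ a} ∈ 𝔭`, gives `λ · x_{ab}` up to a multiple of
`x_{ā b̄}`, which lies below the diagonal; hence `x_{ab} = 0`.
-/

open Matrix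

noncomputable section

/-- The subspace `𝔭` of `ut(2k+1,ℝ)` of matrices `x` with `x a b = 0` unless
`a ≤ k+1` and `b ≥ k+2` (1-based numbering). -/
def polOdd (k : ℕ) : Submodule ℝ (Matrix (Fin (2*k+1)) (Fin (2*k+1)) ℝ) where
  carrier := {x | ∀ a b : Fin (2*k+1), ¬(a.val ≤ k ∧ k+1 ≤ b.val) → x a b = 0}
  add_mem' := by
    intro x y hx hy a b h
    simp only [Matrix.add_apply, hx a b h, hy a b h, add_zero]
  zero_mem' := by
    intro a b _
    rfl
  smul_mem' := by
    intro c x hx a b h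
    simp only [Matrix.smul_apply, hx a b h, smul_zero]

/-- The matrix `F` of the regular functional on `ut(2k+1,ℝ)`:  `λ₁,…,λ_k` on the
antidiagonal of the `k×k` block with rows `k+2,…,2k+1` and columns `1,…,k` (1-based),
with `λ₁` in the lower-left corner and `λ_k` in the upper-right corner of that block. -/
def FregOdd (k : ℕ) (lam : Fin k → ℝ) : Matrix (Fin (2*k+1)) (Fin (2*k+1)) ℝ :=
  ∑ i : Fin k, lam i • Matrix.single
      (⟨2*k-i.val, by have := i.isLt; omega⟩ : Fin (2*k+1))
      (⟨i.val, by have := i.isLt; omega⟩ : Fin (2*k+1)) (1:ℝ)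

/-- `λ` extended by zero, so that `FregOdd k lam = ∑ i, regCoeff k lam i • single i.rev i 1`. -/
def regCoeff (k : ℕ) (lam : Fin k → ℝ) (i : Fin (2*k+1)) : ℝ :=
  if h : i.val < k then lam ⟨i.val, h⟩ else 0

lemma regCoeff_ne_zero {k : ℕ} {lam : Fin k → ℝ} (hlam : ∀ i, lam i ≠ 0) {i : Fin (2*k+1)}
    (hi : i.val < k) : regCoeff k lam i ≠ 0 := by
  simpa [regCoeff, hi] using hlam ⟨i.val, hi⟩

lemma trace_FregOdd_mul (k : ℕ) (lam : Fin k → ℝ) (M : Matrix (Fin (2*k+1)) (Fin (2*k+1)) ℝ) :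
    trace (FregOdd k lam * M) = ∑ i, regCoeff k lam i * M i i.rev := by
  rw [FregOdd, Finset.sum_mul, trace_sum]
  refine Fintype.sum_of_injective (Fin.castLE (by omega)) (Fin.castLE_injective _) _ _ ?_ ?_
  · rintro i hi
    have hik : ¬ i.val < k := fun h => hi ⟨⟨i.val, h⟩, rfl⟩
    simp [regCoeff, hik]
  · intro i
    have hrev : (⟨2*k - i.val, by omega⟩ : Fin (2*k+1)) = (Fin.castLE (by omega) i).rev :=
      Fin.ext (by simp)
    have hcol : (⟨i.val, by omega⟩ : Fin (2*k+1)) = Fin.castLE (by omega) i := rfl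
    simp [trace_single_mul, regCoeff, hrev, hcol]

lemma trace_FregOdd_mul_commutator_single (k : ℕ) (lam : Fin k → ℝ)
    (w : Matrix (Fin (2*k+1)) (Fin (2*k+1)) ℝ) (p q : Fin (2*k+1)) :
    trace (FregOdd k lam * (w * single p q 1 - single p q 1 * w)) =
      regCoeff k lam q.rev * w q.rev p - regCoeff k lam p * w q p.rev := by
  rw [mul_sub, trace_sub, trace_FregOdd_mul, trace_FregOdd_mul]
  congr 1
  · rw [Finset.sum_eq_single q.rev (fun i _ hi => ?_) (by simp)]
    · simp
    · rw [mul_single_apply_of_ne _ _ _ _ _ (fun h => hi (Fin.rev_eq_iff.mp h)), mul_zero]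
  · rw [Finset.sum_eq_single p (fun i _ hi => by rw [single_mul_apply_of_ne _ _ _ _ _ hi,
      mul_zero]) (by simp)]
    simp

lemma isStrictUpper_of_mem_polOdd {k : ℕ} {x : Matrix (Fin (2*k+1)) (Fin (2*k+1)) ℝ}
    (hx : x ∈ polOdd k) : IsStrictUpper x :=
  fun i j hji => hx i j fun h => absurd (Fin.le_def.mp hji) (by omega)

lemma mul_eq_zero_of_mem_polOdd {k : ℕ} {x y : Matrix (Fin (2*k+1)) (Fin (2*k+1)) ℝ}
    (hx : x ∈ polOdd k) (hy : y ∈ polOdd k) : x * y = 0 := by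
  ext a b
  rw [mul_apply, Matrix.zero_apply]
  refine Finset.sum_eq_zero fun c _ => ?_
  by_cases hc : c.val ≤ k
  · rw [hx a c (by omega), zero_mul]
  · rw [hy c b (by omega), mul_zero]

lemma commutator_eq_zero_of_mem_polOdd {k : ℕ} {x y : Matrix (Fin (2*k+1)) (Fin (2*k+1)) ℝ}
    (hx : x ∈ polOdd k) (hy : y ∈ polOdd k) : x * y - y * x = 0 := by
  rw [mul_eq_zero_of_mem_polOdd hx hy, mul_eq_zero_of_mem_polOdd hy hx, sub_zero]

lemma single_mem_polOdd {k : ℕ} {p q : Fin (2*k+1)} (hp : p.val ≤ k) (hq : k + 1 ≤ q.val) :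
    single p q (1 : ℝ) ∈ polOdd k := by
  intro a b hab
  apply single_apply_of_ne
  rintro ⟨rfl, rfl⟩
  exact hab ⟨hp, hq⟩

lemma mem_polOdd_of_isStrictUpper_of_orthogonal {k : ℕ} {lam : Fin k → ℝ}
    (hlam : ∀ i, lam i ≠ 0) {w : Matrix (Fin (2*k+1)) (Fin (2*k+1)) ℝ} (hw : IsStrictUpper w)
    (horth : ∀ y ∈ polOdd k, trace (FregOdd k lam * (w * y - y * w)) = 0) :
    w ∈ polOdd k := by
  intro a b hab
  rcases le_or_gt b a with hba | hab'
  · exact hw a b hba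
  have hlt : a.val < b.val := hab'
  have hbelow : w a.rev b.rev = 0 := hw a.rev b.rev (Fin.rev_le_rev.mpr hab'.le)
  by_cases hb : b.val ≤ k
  · have h := horth _ (single_mem_polOdd (p := b) (q := a.rev) hb (by rw [Fin.val_rev]; omega))
    rw [trace_FregOdd_mul_commutator_single, Fin.rev_rev, hbelow, mul_zero, sub_zero] at h
    exact (mul_eq_zero.mp h).resolve_left (regCoeff_ne_zero hlam (by omega))
  · have ha : k + 1 ≤ a.val := by omega
    have h := horth _ (single_mem_polOdd (p := b.rev) (q := a) (by rw [Fin.val_rev]; omega) ha)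
    rw [trace_FregOdd_mul_commutator_single, Fin.rev_rev, hbelow, mul_zero, zero_sub,
      neg_eq_zero] at h
    exact (mul_eq_zero.mp h).resolve_left (regCoeff_ne_zero hlam (by rw [Fin.val_rev]; omega))

def polOddEquiv (k : ℕ) : polOdd k ≃ₗ[ℝ] (Fin (k+1) × Fin k → ℝ) where
  toFun x ij := x.val ⟨ij.1.val, by omega⟩ ⟨k + 1 + ij.2.val, by omega⟩
  map_add' _ _ := rfl
  map_smul' _ _ := rfl
  invFun f := ⟨of fun a b =>
      if h : a.val ≤ k ∧ k + 1 ≤ b.val then f (⟨a.val, by omega⟩, ⟨b.val - (k+1), by omega⟩)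
      else 0,
    fun _ _ hab => dif_neg hab⟩
  left_inv x := by
    ext a b
    by_cases h : a.val ≤ k ∧ k + 1 ≤ b.val
    · have hb : (⟨k + 1 + (b.val - (k+1)), by omega⟩ : Fin (2*k+1)) = b :=
        Fin.ext (by dsimp only; omega)
      simp only [of_apply, dif_pos h, hb]
    · simp only [of_apply, dif_neg h]
      exact (x.2 a b h).symm
  right_inv f := by
    funext ij
    have hblock : ij.1.val ≤ k ∧ k + 1 ≤ k + 1 + ij.2.val := ⟨by omega, by omega⟩
    simp only [of_apply, dif_pos hblock]
    congr 1
    ext <;> simp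

lemma finrank_polOdd (k : ℕ) : Module.finrank ℝ (polOdd k) = k^2 + k := by
  rw [(polOddEquiv k).finrank_eq, Module.finrank_fintype_fun_eq_card, Fintype.card_prod,
    Fintype.card_fin, Fintype.card_fin]
  ring

theorem polarization_regular_odd_general (k : ℕ)
    (lam : Fin k → ℝ) (hlam : ∀ i : Fin k, lam i ≠ 0) :
    ((polOdd k : Set (Matrix (Fin (2*k+1)) (Fin (2*k+1)) ℝ)) ⊆ {x | IsStrictUpper x}) ∧
    (∀ x ∈ polOdd k, ∀ y ∈ polOdd k, x * y - y * x = 0) ∧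
    Module.finrank ℝ ↥(polOdd k) = k^2 + k ∧
    (∀ x ∈ polOdd k, ∀ y ∈ polOdd k, Matrix.trace (FregOdd k lam * (x * y - y * x)) = 0) ∧
    (∀ W : Submodule ℝ (Matrix (Fin (2*k+1)) (Fin (2*k+1)) ℝ), polOdd k ≤ W →
      (∀ x ∈ W, IsStrictUpper x) →
      (∀ x ∈ W, ∀ y ∈ W, Matrix.trace (FregOdd k lam * (x * y - y * x)) = 0) →
      W = polOdd k) := by
  refine ⟨fun _ hx => isStrictUpper_of_mem_polOdd hx,
    fun _ hx _ hy => commutator_eq_zero_of_mem_polOdd hx hy, finrank_polOdd k,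
    fun _ hx _ hy => by rw [commutator_eq_zero_of_mem_polOdd hx hy, mul_zero, trace_zero], ?_⟩
  intro W hpW hW hB
  refine le_antisymm (fun w hw => ?_) hpW
  exact mem_polOdd_of_isStrictUpper_of_orthogonal hlam (hW w hw) fun y hy => hB w hw y (hpW hy)

/-- `𝔭` is an abelian Lie subalgebra of `ut(2k+1,ℝ)` of dimension `k²+k`, the form
`B_f(x,y) = f(⁅x,y⁆)` vanishes identically on `𝔭`, and `𝔭` is a polarization of the
regular functional `f = trace(F·–)`: any subspace of `ut(2k+1,ℝ)` containing `𝔭` on which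
`B_f` vanishes equals `𝔭`. -/
theorem polarization_regular_odd (k : ℕ) (hk : 1 ≤ k)
    (lam : Fin k → ℝ) (hlam : ∀ i : Fin k, lam i ≠ 0) :
    ((polOdd k : Set (Matrix (Fin (2*k+1)) (Fin (2*k+1)) ℝ)) ⊆ {x | IsStrictUpper x}) ∧
    (∀ x ∈ polOdd k, ∀ y ∈ polOdd k, x * y - y * x = 0) ∧
    Module.finrank ℝ ↥(polOdd k) = k^2 + k ∧
    (∀ x ∈ polOdd k, ∀ y ∈ polOdd k, Matrix.trace (FregOdd k lam * (x * y - y * x)) = 0) ∧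
    (∀ W : Submodule ℝ (Matrix (Fin (2*k+1)) (Fin (2*k+1)) ℝ), polOdd k ≤ W →
      (∀ x ∈ W, IsStrictUpper x) →
      (∀ x ∈ W, ∀ y ∈ W, Matrix.trace (FregOdd k lam * (x * y - y * x)) = 0) →
      W = polOdd k) :=
  polarization_regular_odd_general k lam hlam

end
end
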